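/- arXiv:2001.10154 — 8 statements merged into one kernel-verified Lean document; each statement's English description precedes it below -/
import Mathlib

section
/- Let S1 = S(γ^((q-1)/d1), 0, H1) and S2 = S(γ^((q-1)/d2), 0, H2) be subgroups of AGL(1,F_q), where d1 | d2 | q-1, H1 ⊆ H2, and both triples (γ^((q-1)/d1), 0, H1) and (γ^((q-1)/d2), 0, H2) lie in S. If H1 is NOT closed under multiplication by the subfield F_{p(d2)} of F_q, then μ(S1, S2) = 0. -/
/-!
Pick `x` in the field `K` with `p(d₂)` elements and `h ∈ H₁` with `x h ∉ H₁`, and let `t` be the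
translation by `x h`. Since `K ⊆ F_p(a₂)`, `t ∈ S₂ \ S₁`, and by Weisner's theorem `μ(S₁, S₂) = 0`
once `S₂` is the only `S₁ ≤ M ≤ S₂` with `M ⊔ ⟨t⟩ = S₂`. Translations have determinant `1`, so
such an `M` contains some `[[a₂, *], [0, 1]]`; conjugation by it shows that the translation part
of `M` is stable under `F_p(a₂) ⊇ K`. Hence `t ∈ M` and `M = S₂`.
-/

open Matrix
open scoped Classical

abbrev GL2 (F : Type) [Field F] := GL (Fin 2) F

/-- `AGL(1,F)`: the subgroup of `GL(2,F)` of matrices of the form `[[a,b],[0,1]]`. -/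
def AGL (F : Type) [Field F] : Subgroup (GL2 F) where
  carrier := {g | (g : Matrix (Fin 2) (Fin 2) F) 1 0 = 0 ∧
                  (g : Matrix (Fin 2) (Fin 2) F) 1 1 = 1}
  one_mem' := by
    constructor <;> simp [Matrix.one_apply]
  mul_mem' := by
    rintro a b ⟨ha0, ha1⟩ ⟨hb0, hb1⟩
    constructor <;>
      simp [Units.val_mul, Matrix.mul_apply, Fin.sum_univ_two, ha0, ha1, hb0, hb1]
  inv_mem' := by
    rintro g ⟨h0, h1⟩
    have hdet : ((g : Matrix (Fin 2) (Fin 2) F) 0 0) ≠ 0 := by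
      have hu : IsUnit ((g : Matrix (Fin 2) (Fin 2) F).det) :=
        (Matrix.isUnit_iff_isUnit_det _).1 g.isUnit
      rw [Matrix.det_fin_two, h0, h1] at hu
      simpa using hu.ne_zero
    have hinv : ((g⁻¹ : GL2 F) : Matrix (Fin 2) (Fin 2) F)
        = ((g : Matrix (Fin 2) (Fin 2) F))⁻¹ := Matrix.coe_units_inv g
    constructor <;>
      simp [hinv, Matrix.inv_def, Matrix.adjugate_fin_two, Matrix.det_fin_two,
        h0, h1, hdet]

/-- Membership of a triple `(a,b,H)` in the set `𝒮`: `a ∈ F*`, `H` is an additive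
subgroup of `F` closed under multiplication by the subfield `F_p(a)` generated by `a`,
and `b = 0` when `a = 1`. -/
def memS {F : Type} [Field F] (a b : F) (H : AddSubgroup F) : Prop :=
  a ≠ 0 ∧ (a = 1 → b = 0) ∧ ∀ x ∈ Subfield.closure {a}, ∀ h ∈ H, x * h ∈ H

/-- `S(a,b,H)`: the subgroup of `GL(2,F)` generated by the matrix `[[a,b],[0,1]]`
together with the matrices `[[1,h],[0,1]]`, `h ∈ H`. -/
def Sgrp {F : Type} [Field F] (a b : F) (H : AddSubgroup F) : Subgroup (GL2 F) :=
  Subgroup.closure {g : GL2 F |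
    (g : Matrix (Fin 2) (Fin 2) F) = !![a, b; 0, 1] ∨
    ∃ h ∈ H, (g : Matrix (Fin 2) (Fin 2) F) = !![1, h; 0, 1]}

/-- `pPow p d` is `p(d)`: the smallest (positive) power of `p` that is `≡ 1 (mod d)`. -/
noncomputable def pPow (p d : ℕ) : ℕ := sInf {m | (∃ k : ℕ, 1 ≤ k ∧ m = p ^ k) ∧ m % d = 1 % d}

/-- Weisner's theorem. -/
theorem sum_mobius_sup_eq_zero {α : Type*} [Lattice α] [Fintype α] (μ : α → α → ℤ)
    (hμ : ∀ K L, K ≤ L → ∑ M ∈ Finset.univ.filter (fun M => K ≤ M ∧ M ≤ L), μ K M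
      = if K = L then 1 else 0)
    {K a : α} (haK : ¬ a ≤ K) (w : α) (hw : K ⊔ a ≤ w) :
    ∑ M ∈ Finset.univ.filter (fun M => K ≤ M ∧ M ⊔ a = w), μ K M = 0 := by
  induction w using WellFoundedLT.induction with
  | _ w ih =>
  set g : α → ℤ := fun z => ∑ M ∈ Finset.univ.filter (fun M => K ≤ M ∧ M ⊔ a = z), μ K M
  have hmaps : ∀ M ∈ Finset.univ.filter (fun M => K ≤ M ∧ M ≤ w),
      M ⊔ a ∈ Finset.univ.filter (fun z => K ⊔ a ≤ z ∧ z ≤ w) := by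
    simp only [Finset.mem_filter, Finset.mem_univ, true_and]
    exact fun M ⟨hKM, hMw⟩ => ⟨sup_le_sup_right hKM a, sup_le hMw (le_sup_right.trans hw)⟩
  -- `∑_{K ≤ M ≤ w} μ K M = 0`, regrouped by the value of `M ⊔ a`
  have hfiber : ∑ z ∈ Finset.univ.filter (fun z => K ⊔ a ≤ z ∧ z ≤ w), g z = 0 := by
    have hKw := hμ K w (le_sup_left.trans hw)
    rw [if_neg (fun h : K = w => haK (h ▸ le_sup_right.trans hw)),
      ← Finset.sum_fiberwise_of_maps_to hmaps] at hKw
    rw [← hKw]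
    refine Finset.sum_congr rfl fun z hz => Finset.sum_congr ?_ fun _ _ => rfl
    simp only [Finset.mem_filter, Finset.mem_univ, true_and] at hz
    ext M
    simp only [Finset.mem_filter, Finset.mem_univ, true_and]
    exact ⟨fun ⟨hKM, hM⟩ => ⟨⟨hKM, hM ▸ hz.2 |> le_sup_left.trans⟩, hM⟩,
      fun ⟨⟨hKM, _⟩, hM⟩ => ⟨hKM, hM⟩⟩
  have hw_mem : w ∈ Finset.univ.filter (fun z => K ⊔ a ≤ z ∧ z ≤ w) :=
    Finset.mem_filter.2 ⟨Finset.mem_univ _, hw, le_rfl⟩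
  rwa [Finset.sum_eq_single_of_mem w hw_mem fun z hz hzw => by
    simp only [Finset.mem_filter, Finset.mem_univ, true_and] at hz
    exact ih z (lt_of_le_of_ne hz.2 hzw) hz.1] at hfiber

theorem mobius_eq_zero_of_sup_eq {α : Type*} [Lattice α] [Finite α] (μ : α → α → ℤ)
    (hμ : ∀ K L, K ≤ L → (∑ᶠ M ∈ {M | K ≤ M ∧ M ≤ L}, μ K M) = if K = L then 1 else 0)
    {K L a : α} (haL : a ≤ L) (haK : ¬ a ≤ K) (hKL : K ≤ L)
    (hsup : ∀ M, K ≤ M → M ≤ L → M ⊔ a = L → M = L) : μ K L = 0 := by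
  have := Fintype.ofFinite α
  have hμ' : ∀ K L, K ≤ L → ∑ M ∈ Finset.univ.filter (fun M => K ≤ M ∧ M ≤ L), μ K M
      = if K = L then 1 else 0 := fun K L hKL => by
    rw [← hμ K L hKL, finsum_mem_eq_toFinset_sum, Set.toFinset_ofPred]
  have h := sum_mobius_sup_eq_zero μ hμ' haK L (sup_le hKL haL)
  rwa [Finset.sum_eq_single_of_mem L (by simp [hKL, haL]) fun M hM hML => by
    simp only [Finset.mem_filter, Finset.mem_univ, true_and] at hM
    exact absurd (hsup M hM.1 (hM.2 ▸ le_sup_left) hM.2) hML] at h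

def AddSubgroup.multipliers {R : Type*} [Ring R] (A : AddSubgroup R) : Subring R where
  carrier := {x | ∀ a ∈ A, x * a ∈ A}
  one_mem' a ha := by simpa using ha
  mul_mem' hx hy a ha := by simpa [mul_assoc] using hx _ (hy a ha)
  zero_mem' a _ := by simp [A.zero_mem]
  add_mem' hx hy a ha := by simpa [add_mul] using A.add_mem (hx a ha) (hy a ha)
  neg_mem' hx a ha := by simpa using A.neg_mem (hx a ha)

section FiniteField
variable {F : Type*} [Field F]

open Polynomial in
theorem ncard_setOf_pow_eq_self_le {m : ℕ} (hm : 1 < m) : {x : F | x ^ m = x}.ncard ≤ m := by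
  have hroots : {x : F | x ^ m = x} ⊆ ((X ^ m - X : F[X]).roots.toFinset : Set F) := by
    intro x hx
    simp [FiniteField.X_pow_card_sub_X_ne_zero F hm, sub_eq_zero.2 hx.out]
  calc {x : F | x ^ m = x}.ncard ≤ (X ^ m - X : F[X]).roots.toFinset.card := by
        simpa using Set.ncard_le_ncard hroots
    _ ≤ m := (Multiset.toFinset_card_le _).trans <|
        (Polynomial.card_roots' _).trans (FiniteField.X_pow_card_sub_X_natDegree_eq F hm).le

theorem Subring.inv_mem_of_finite [Finite F] (R : Subring F) {x : F}
    (hx : x ∈ R) : x⁻¹ ∈ R := by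
  have := Fintype.ofFinite F
  rcases eq_or_ne x 0 with rfl | hx0
  · simp [R.zero_mem]
  have hinv : x⁻¹ = x ^ (Fintype.card F - 2) := by
    refine inv_eq_of_mul_eq_one_right ?_
    rw [← pow_succ', ← FiniteField.pow_card_sub_one_eq_one x hx0]
    congr 1
    have := Fintype.one_lt_card (α := F)
    omega
  exact hinv ▸ pow_mem hx _

theorem Subfield.closure_subset_of_subset_subring [Finite F] {s : Set F}
    {R : Subring F} (h : s ⊆ R) : (Subfield.closure s : Set F) ⊆ R :=
  Subfield.closure_le (t := { R with inv_mem' := fun _ => R.inv_mem_of_finite }).2 h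

theorem subset_subfieldClosure_of_card_eq_pPow [Finite F] {p : ℕ} [Fact p.Prime] [CharP F p]
    {a : F} (ha : a ≠ 0) {K : Subfield F} (hK : Nat.card K = pPow p (orderOf a)) :
    (K : Set F) ⊆ Subfield.closure {a} := by
  have := Fintype.ofFinite F
  set L := Subfield.closure {a}
  set d := orderOf a
  -- `L = F_p(a)` has `p ^ j ≡ 1 (mod d)` elements, hence at least `p(d)`, while all its elements
  -- are roots of `X ^ p(d) - X`; so `L` is that root set, which contains `K`.
  obtain ⟨j, -, hLcard⟩ := FiniteField.card L p
  have hLmem : Fintype.card L ∈ {m | (∃ k : ℕ, 1 ≤ k ∧ m = p ^ k) ∧ m % d = 1 % d} := by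
    refine ⟨⟨j, j.pos, hLcard⟩, Nat.ModEq.symm <| (Nat.modEq_iff_dvd' Fintype.card_pos).2 ?_⟩
    refine orderOf_dvd_of_pow_eq_one ?_
    simpa using congrArg Subtype.val (FiniteField.pow_card_sub_one_eq_one
      (⟨a, Subfield.subset_closure rfl⟩ : L) (by simpa [Subtype.ext_iff] using ha))
  obtain ⟨⟨k, hk, hmk⟩, hmod⟩ := Nat.sInf_mem ⟨_, hLmem⟩
  have hmL : pPow p d ≤ Fintype.card L := Nat.sInf_le hLmem
  change pPow p d = p ^ k at hmk
  change pPow p d % d = 1 % d at hmod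
  have hm1 : 1 < pPow p d := hmk ▸ Nat.one_lt_pow (by omega) (Fact.out : p.Prime).one_lt
  have ham : a ^ pPow p d = a := by
    obtain ⟨c, hc⟩ := (Nat.modEq_iff_dvd' hm1.le).1 hmod.symm
    rw [← Nat.sub_add_cancel hm1.le, pow_succ, hc, pow_mul, pow_orderOf_eq_one, one_pow, one_mul]
  set E := (iterateFrobenius F p k).eqLocusField (RingHom.id F)
  have hE : ∀ x, x ∈ E ↔ x ^ pPow p d = x := fun x => by
    rw [RingHom.mem_eqLocusField, iterateFrobenius_def, hmk, RingHom.id_apply]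
  have hLE : (L : Set F) ⊆ E := Subfield.closure_le.2 <| Set.singleton_subset_iff.2 ((hE a).2 ham)
  have hLeqE : (L : Set F) = E := Set.eq_of_subset_of_ncard_le hLE <|
    calc (E : Set F).ncard ≤ {x : F | x ^ pPow p d = x}.ncard :=
          Set.ncard_le_ncard (fun x hx => (hE x).1 hx)
      _ ≤ pPow p d := ncard_setOf_pow_eq_self_le hm1
      _ ≤ (L : Set F).ncard := by rwa [← Nat.card_coe_set_eq, Nat.card_eq_fintype_card]
  intro x hx
  have := Fintype.ofFinite K
  rw [hLeqE, SetLike.mem_coe, hE, ← hK, Nat.card_eq_fintype_card]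
  simpa using congrArg Subtype.val (FiniteField.pow_card (⟨x, hx⟩ : K))

theorem orderOf_eq_card_sub_one_of_forall_eq_pow [Fintype F] {γ : F}
    (hγ0 : γ ≠ 0) (hγ : ∀ x : F, x ≠ 0 → ∃ k : ℕ, x = γ ^ k) : orderOf γ = Fintype.card F - 1 := by
  have : orderOf (Units.mk0 γ hγ0) = Nat.card Fˣ :=
    orderOf_eq_card_of_forall_mem_zpowers fun x => by
      obtain ⟨k, hk⟩ := hγ x x.ne_zero
      exact ⟨k, Units.ext (by simp [hk])⟩
  rw [← Fintype.card_units, ← Nat.card_eq_fintype_card, ← this, ← orderOf_units, Units.val_mk0]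

end FiniteField

section Affine
variable {F : Type} [Field F]

theorem mem_AGL_iff {g : GL2 F} : g ∈ AGL F ↔ g.1 1 0 = 0 ∧ g.1 1 1 = 1 := Iff.rfl

theorem mem_AGL_of_coe_eq {g : GL2 F} {a b : F} (hg : g.1 = !![a, b; 0, 1]) : g ∈ AGL F := by
  simp [mem_AGL_iff, hg]

theorem coe_eq_of_mem_AGL {g : GL2 F} (hg : g ∈ AGL F) : g.1 = !![g.1 0 0, g.1 0 1; 0, 1] := by
  rw [← hg.1, ← hg.2]
  exact Matrix.eta_fin_two _

theorem mul_apply_zero_zero_of_mem_AGL (g : GL2 F) {h : GL2 F} (hh : h ∈ AGL F) :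
    (g * h).1 0 0 = g.1 0 0 * h.1 0 0 := by
  simp [Matrix.mul_apply, hh.1]

theorem mul_apply_zero_one_of_mem_AGL (g : GL2 F) {h : GL2 F} (hh : h ∈ AGL F) :
    (g * h).1 0 1 = g.1 0 0 * h.1 0 1 + g.1 0 1 := by
  simp [Matrix.mul_apply, hh.2]

theorem det_eq_apply_zero_zero_of_mem_AGL {g : GL2 F} (hg : g ∈ AGL F) :
    (Matrix.GeneralLinearGroup.det g : F) = g.1 0 0 := by
  simp [Matrix.det_fin_two, hg.1, hg.2]

def translation (b : F) : GL2 F := Matrix.GeneralLinearGroup.mkOfDetNeZero !![1, b; 0, 1] (by simp)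

@[simp] theorem coe_translation (b : F) : (translation b).1 = !![1, b; 0, 1] := rfl

theorem translation_add (b c : F) : translation (b + c) = translation b * translation c :=
  Units.ext <| by simp [add_comm]

theorem translation_zero : translation (0 : F) = 1 :=
  Units.ext <| by simp [Matrix.one_fin_two]

theorem translation_neg (b : F) : translation (-b) = (translation b)⁻¹ :=
  eq_inv_of_mul_eq_one_left <| by rw [← translation_add, neg_add_cancel, translation_zero]

theorem conj_translation {g : GL2 F} (hg : g ∈ AGL F) (b : F) :
    g * translation b * g⁻¹ = translation (g.1 0 0 * b) := by
  rw [mul_inv_eq_iff_eq_mul]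
  refine Units.ext ?_
  rw [Units.val_mul, Units.val_mul, coe_eq_of_mem_AGL hg]
  simp [add_comm]

def dilation : Fˣ →* GL2 F where
  toFun a := Matrix.GeneralLinearGroup.mkOfDetNeZero !![(a : F), 0; 0, 1] (by simp)
  map_one' := Units.ext <| by simp [Matrix.one_fin_two]
  map_mul' a b := Units.ext <| by simp

@[simp] theorem coe_dilation (a : Fˣ) : (dilation a).1 = !![(a : F), 0; 0, 1] := rfl

/-- The `g = [[α, β], [0, 1]]` with `β ∈ H` and `α H = H`: the setwise stabiliser of `H` under
`x ↦ α x + β`. -/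
def affineStabilizer (H : AddSubgroup F) : Subgroup (GL2 F) where
  carrier := {g | g ∈ AGL F ∧ g.1 0 1 ∈ H ∧ ∀ h, g.1 0 0 * h ∈ H ↔ h ∈ H}
  one_mem' := ⟨(AGL F).one_mem, by simp, by simp⟩
  mul_mem' := by
    rintro g g' ⟨hg, hg1, hg0⟩ ⟨hg', hg1', hg0'⟩
    refine ⟨(AGL F).mul_mem hg hg', ?_, fun h => ?_⟩
    · rw [mul_apply_zero_one_of_mem_AGL g hg']
      exact H.add_mem ((hg0 _).2 hg1') hg1
    · rw [mul_apply_zero_zero_of_mem_AGL g hg', mul_assoc, hg0, hg0']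
  inv_mem' := by
    rintro g ⟨hg, hg1, hg0⟩
    have h00 : (g⁻¹).1 0 0 * g.1 0 0 = 1 := by
      rw [← mul_apply_zero_zero_of_mem_AGL _ hg, inv_mul_cancel]; simp
    have h01 : (g⁻¹).1 0 0 * g.1 0 1 + (g⁻¹).1 0 1 = 0 := by
      rw [← mul_apply_zero_one_of_mem_AGL _ hg, inv_mul_cancel]; simp
    have hmul : ∀ h, (g⁻¹).1 0 0 * h ∈ H ↔ h ∈ H := fun h => by
      rw [← hg0, ← mul_assoc, mul_comm (g.1 0 0), h00, one_mul]
    refine ⟨(AGL F).inv_mem hg, ?_, hmul⟩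
    rw [eq_neg_of_add_eq_zero_right h01, H.neg_mem_iff, hmul]
    exact hg1

theorem Sgrp_le_AGL (a b : F) (H : AddSubgroup F) : Sgrp a b H ≤ AGL F :=
  (Subgroup.closure_le _).2 fun _ hg => hg.elim mem_AGL_of_coe_eq
    fun ⟨_, _, hg⟩ => mem_AGL_of_coe_eq hg

theorem Sgrp_le_affineStabilizer {a b : F} {H : AddSubgroup F} (ha : ∀ h, a * h ∈ H ↔ h ∈ H)
    (hb : b ∈ H) : Sgrp a b H ≤ affineStabilizer H := by
  refine (Subgroup.closure_le _).2 ?_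
  rintro g (hg | ⟨h, hh, hg⟩)
  · exact ⟨mem_AGL_of_coe_eq hg, by simpa [hg] using hb, by simpa [hg] using ha⟩
  · exact ⟨mem_AGL_of_coe_eq hg, by simpa [hg] using hh, by simp [hg]⟩

theorem translation_mem_Sgrp (a b : F) {H : AddSubgroup F} {h : F} (hh : h ∈ H) :
    translation h ∈ Sgrp a b H :=
  Subgroup.subset_closure (Or.inr ⟨h, hh, rfl⟩)

theorem dilation_mem_Sgrp {a : F} (ha : a ≠ 0) (H : AddSubgroup F) :
    dilation (Units.mk0 a ha) ∈ Sgrp a 0 H :=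
  Subgroup.subset_closure (Or.inl rfl)

theorem Sgrp_pow_le_Sgrp {a : F} (ha : a ≠ 0) (n : ℕ) {H H' : AddSubgroup F} (hH : H ≤ H') :
    Sgrp (a ^ n) 0 H ≤ Sgrp a 0 H' := by
  refine (Subgroup.closure_le _).2 ?_
  rintro g (hg | ⟨h, hh, hg⟩)
  · have : g = dilation (Units.mk0 a ha ^ n) := Units.ext <| by rw [hg, coe_dilation]; simp
    rw [this, map_pow]
    exact pow_mem (dilation_mem_Sgrp ha H') n
  · rw [show g = translation h from Units.ext hg]
    exact translation_mem_Sgrp a 0 (hH hh)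

def translations (M : Subgroup (GL2 F)) : AddSubgroup F where
  carrier := {b | translation b ∈ M}
  zero_mem' := by simp [translation_zero]
  add_mem' hb hc := by simpa [translation_add] using M.mul_mem hb hc
  neg_mem' hb := by simpa [translation_neg] using M.inv_mem hb

theorem mem_translations {M : Subgroup (GL2 F)} {b : F} : b ∈ translations M ↔ translation b ∈ M :=
  Iff.rfl

theorem apply_zero_zero_mem_multipliers {M : Subgroup (GL2 F)} (hM : M ≤ AGL F) {g : GL2 F}
    (hg : g ∈ M) : g.1 0 0 ∈ (translations M).multipliers := fun b hb => by
  simpa [mem_translations, conj_translation (hM hg)] using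
    M.mul_mem (M.mul_mem hg hb) (M.inv_mem hg)

theorem exists_apply_zero_zero_eq_of_mem_sup_zpowers {M : Subgroup (GL2 F)} (hM : M ≤ AGL F)
    {g : GL2 F} (hg : g ∈ AGL F) {b : F} (hgM : g ∈ M ⊔ Subgroup.zpowers (translation b)) :
    ∃ m ∈ M, m.1 0 0 = g.1 0 0 := by
  have hdet : Matrix.GeneralLinearGroup.det (translation b) = 1 := Units.ext (by simp)
  have := Subgroup.mem_map_of_mem Matrix.GeneralLinearGroup.det hgM
  rw [Subgroup.map_sup, MonoidHom.map_zpowers, hdet, Subgroup.zpowers_one_eq_bot, sup_bot_eq]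
    at this
  obtain ⟨m, hm, hmg⟩ := Subgroup.mem_map.1 this
  exact ⟨m, hm, by rw [← det_eq_apply_zero_zero_of_mem_AGL (hM hm), hmg,
    det_eq_apply_zero_zero_of_mem_AGL hg]⟩

theorem eq_Sgrp_of_sup_zpowers_translation_eq [Finite F] {a x b : F} (ha : a ≠ 0)
    {H : AddSubgroup F} {M : Subgroup (GL2 F)} (hM : M ≤ Sgrp a 0 H)
    (hx : x ∈ Subfield.closure {a}) (hb : b ∈ translations M)
    (hsup : M ⊔ Subgroup.zpowers (translation (x * b)) = Sgrp a 0 H) : M = Sgrp a 0 H := by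
  have hMA := hM.trans (Sgrp_le_AGL a 0 H)
  obtain ⟨m, hm, hm00⟩ := exists_apply_zero_zero_eq_of_mem_sup_zpowers hMA
    (mem_AGL_of_coe_eq (coe_dilation _)) (hsup ▸ dilation_mem_Sgrp ha H)
  have ha' : a ∈ (translations M).multipliers := by
    simpa [hm00] using apply_zero_zero_mem_multipliers hMA hm
  have hxb : translation (x * b) ∈ M :=
    Subfield.closure_subset_of_subset_subring (Set.singleton_subset_iff.2 ha') hx b hb
  rw [← hsup]
  exact (sup_eq_left.2 (Subgroup.zpowers_le.2 hxb)).symm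

end Affine

theorem mul_mem_iff_of_memS {F : Type} [Field F] {a b : F} {H : AddSubgroup F} (hS : memS a b H)
    (x : F) : a * x ∈ H ↔ x ∈ H :=
  have ha : a ∈ Subfield.closure {a} := Subfield.subset_closure rfl
  ⟨fun hx => by simpa [hS.1] using hS.2.2 a⁻¹ (inv_mem ha) _ hx, hS.2.2 a ha x⟩

theorem translations_Sgrp {F : Type} [Field F] {a : F} {H : AddSubgroup F} (hS : memS a 0 H) :
    translations (Sgrp a 0 H) = H :=
  le_antisymm (fun x hx => by
      simpa using (Sgrp_le_affineStabilizer (mul_mem_iff_of_memS hS) H.zero_mem hx).2.1)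
    fun _ hx => translation_mem_Sgrp a 0 hx

/-- If `H₁` is not closed under multiplication by the subfield `F_{p(d₂)}`, then
`μ(S(γ^((q-1)/d₁),0,H₁), S(γ^((q-1)/d₂),0,H₂)) = 0`. -/
theorem stmt0 (F : Type) [Field F] [Fintype F] (p q : ℕ) (hp : p.Prime)
    (hchar : ringChar F = p) (hq : Fintype.card F = q)
    (γ : F) (hγ0 : γ ≠ 0) (hγ : ∀ x : F, x ≠ 0 → ∃ k : ℕ, x = γ ^ k)
    (d1 d2 : ℕ) (hd12 : d1 ∣ d2) (hd2 : d2 ∣ q - 1)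
    (H1 H2 : AddSubgroup F) (hH12 : H1 ≤ H2)
    (hS1 : memS (γ ^ ((q - 1) / d1)) 0 H1)
    (hS2 : memS (γ ^ ((q - 1) / d2)) 0 H2)
    (μ : Subgroup (GL2 F) → Subgroup (GL2 F) → ℤ)
    (hμ : ∀ K L : Subgroup (GL2 F), K ≤ L →
      (∑ᶠ M ∈ {M : Subgroup (GL2 F) | K ≤ M ∧ M ≤ L}, μ K M) = if K = L then 1 else 0)
    (hnot : ∃ K : Subfield F, Nat.card K = pPow p d2 ∧
      ¬ (∀ x ∈ K, ∀ h ∈ H1, x * h ∈ H1)) :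
    μ (Sgrp (γ ^ ((q - 1) / d1)) 0 H1) (Sgrp (γ ^ ((q - 1) / d2)) 0 H2) = 0 := by
  obtain ⟨K, hKcard, hK⟩ := hnot
  push Not at hK
  obtain ⟨x, hxK, h, hh, hxh⟩ := hK
  have := Fact.mk hp
  have := ringChar.of_eq hchar
  have hγord : orderOf γ = q - 1 := hq ▸ orderOf_eq_card_sub_one_of_forall_eq_pow hγ0 hγ
  have hq1 : q - 1 ≠ 0 := by
    have := Fintype.one_lt_card (α := F)
    omega
  have ha2 : γ ^ ((q - 1) / d2) ≠ 0 := pow_ne_zero _ hγ0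
  have hx : x ∈ Subfield.closure {γ ^ ((q - 1) / d2)} := by
    refine subset_subfieldClosure_of_card_eq_pPow ha2 ?_ hxK
    rwa [← hγord, orderOf_pow_orderOf_div (hγord ▸ hq1) (hγord ▸ hd2)]
  have hS12 : Sgrp (γ ^ ((q - 1) / d1)) 0 H1 ≤ Sgrp (γ ^ ((q - 1) / d2)) 0 H2 := by
    rw [← Nat.div_mul_div hd2 hd12, pow_mul]
    exact Sgrp_pow_le_Sgrp ha2 _ hH12
  refine mobius_eq_zero_of_sup_eq μ hμ
    (Subgroup.zpowers_le.2 (translation_mem_Sgrp _ 0 (hS2.2.2 x hx h (hH12 hh))))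
    (fun ht => hxh (translations_Sgrp hS1 ▸ Subgroup.zpowers_le.1 ht)) hS12
    fun M hS1M hMS2 hsup => eq_Sgrp_of_sup_zpowers_translation_eq ha2 hMS2 hx
      (hS1M (translation_mem_Sgrp _ 0 hh)) hsup
end

section
/- Let F_r ⊆ F_q be finite fields (so r and q are powers of the same prime and F_r is a subfield of F_q), and let V be a finite-dimensional vector space over F_q. Then the sum, over all F_r-subspaces L of V whose F_q-span equals V, of (-1)^(dim_{F_r} L) · r^(dim_{F_r} L · (dim_{F_r} L - 1)/2), equals (-1)^(dim_{F_q} V) · q^(dim_{F_q} V · (dim_{F_q} V - 1)/2). -/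
open Module Submodule

set_option maxHeartbeats 1000000

private def mymu (r m : ℕ) : ℤ := (-1) ^ m * (r : ℤ) ^ (m * (m - 1) / 2)

private lemma mymu_succ (r m : ℕ) : mymu r (m + 1) = -((r : ℤ) ^ m * mymu r m) := by
  simp only [mymu, Nat.triangle_succ, pow_succ, pow_add]
  ring

private lemma mymu_zero (r : ℕ) : mymu r 0 = 1 := by simp [mymu]

private lemma card_isCompl {k : Type*} [Field k] [Finite k] {U : Type*} [AddCommGroup U]
    [Module k U] [Finite U] (p : Submodule k U) :
    Nat.card { q : Submodule k U // IsCompl p q }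
      = Nat.card k ^ (finrank k (U ⧸ p) * finrank k ↥p) := by
  classical
  haveI : FiniteDimensional k U := Module.Finite.of_finite
  obtain ⟨q₀, hq₀⟩ := p.exists_isCompl
  set f₀ : U →ₗ[k] p := p.linearProjOfIsCompl q₀ hq₀ with hf₀def
  have hf₀ : ∀ x : p, f₀ ↑x = x := fun x => Submodule.linearProjOfIsCompl_apply_left hq₀ x
  have key : ∀ f : { f : U →ₗ[k] ↥p // ∀ x : ↥p, f ↑x = x }, p ≤ LinearMap.ker (f.1 - f₀) := by
    intro f x hx
    simp only [LinearMap.mem_ker, LinearMap.sub_apply]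
    rw [show f.1 x = ⟨x, hx⟩ from f.2 ⟨x, hx⟩, show f₀ x = ⟨x, hx⟩ from hf₀ ⟨x, hx⟩, sub_self]
  have e : { f : U →ₗ[k] ↥p // ∀ x : ↥p, f ↑x = x } ≃ ((U ⧸ p) →ₗ[k] ↥p) :=
    { toFun := fun f => p.liftQ (f.1 - f₀) (key f)
      invFun := fun g => ⟨f₀ + g.comp p.mkQ, by
        intro x
        have hx : p.mkQ ↑x = 0 := by
          rw [Submodule.mkQ_apply]
          exact (Submodule.Quotient.mk_eq_zero p).2 x.2
        simp [hx, hf₀ x]⟩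
      left_inv := fun f => by
        apply Subtype.ext
        apply LinearMap.ext
        intro x
        simp only [LinearMap.add_apply, LinearMap.coe_comp, Function.comp_apply,
          Submodule.mkQ_apply, Submodule.liftQ_apply, LinearMap.sub_apply]
        abel
      right_inv := fun g => by
        apply LinearMap.ext
        intro y
        obtain ⟨x, rfl⟩ := Submodule.Quotient.mk_surjective p y
        rw [show (Submodule.Quotient.mk x : U ⧸ p) = p.mkQ x from rfl]
        rw [Submodule.mkQ_apply, Submodule.liftQ_apply]
        simp }
  rw [Nat.card_congr ((p.isComplEquivProj).trans e)]
  haveI : Finite (U ⧸ p) := Finite.of_surjective _ (Submodule.Quotient.mk_surjective p)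
  haveI : Finite ((U ⧸ p) →ₗ[k] ↥p) := Finite.of_injective _ DFunLike.coe_injective
  haveI := Fintype.ofFinite ((U ⧸ p) →ₗ[k] ↥p)
  haveI := Fintype.ofFinite k
  rw [Nat.card_eq_fintype_card, Nat.card_eq_fintype_card, card_eq_pow_finrank (K := k),
    Module.finrank_linearMap]

private lemma sum_mu_eq (k : Type*) [Field k] [Finite k] (W : Type*) [AddCommGroup W]
    [Module k W] [Finite W] :
    ∑ᶠ L : Submodule k W, mymu (Nat.card k) (finrank k ↥L)
      = if finrank k W = 0 then 1 else 0 := by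
  classical
  haveI : FiniteDimensional k W := Module.Finite.of_finite
  haveI : Finite (Submodule k W) := Finite.of_injective _ SetLike.coe_injective
  haveI := Fintype.ofFinite (Submodule k W)
  rw [finsum_eq_sum_of_fintype]
  set r := Nat.card k with hr
  by_cases h0 : finrank k W = 0
  · rw [if_pos h0]
    haveI : Subsingleton W := finrank_zero_iff.mp h0
    haveI : Unique (Submodule k W) := ⟨⟨⊥⟩, fun a => Subsingleton.elim a ⊥⟩
    have hall : ∀ L : Submodule k W, mymu r (finrank k ↥L) = 1 := by
      intro L
      have hL0 : finrank k ↥L = 0 := Nat.le_zero.mp (h0 ▸ Submodule.finrank_le L)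
      rw [hL0, mymu_zero]
    rw [Finset.sum_congr rfl (fun L _ => hall L), Finset.sum_const, Finset.card_univ,
      Fintype.card_unique]
    simp
  · rw [if_neg h0]
    haveI : Nontrivial W := Module.finrank_pos_iff.mp (Nat.pos_of_ne_zero h0)
    obtain ⟨v, hv⟩ := exists_ne (0 : W)
    set ℓ : Submodule k W := span k {v} with hℓdef
    have hℓ1 : finrank k ↥ℓ = 1 := finrank_span_singleton hv
    have hvℓ : v ∈ ℓ := Submodule.mem_span_singleton_self v
    have hdis : ∀ L : Submodule k W, ¬ ℓ ≤ L → ℓ ⊓ L = ⊥ := by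
      intro L hL
      rw [eq_bot_iff]
      intro x hx
      obtain ⟨hx1, hx2⟩ := Submodule.mem_inf.mp hx
      obtain ⟨c, rfl⟩ := Submodule.mem_span_singleton.mp hx1
      rcases eq_or_ne c 0 with rfl | hc
      · simp
      · have hvL : v ∈ L := by
          simpa [smul_smul, inv_mul_cancel₀ hc] using L.smul_mem c⁻¹ hx2
        exact absurd ((Submodule.span_singleton_le_iff_mem v L).2 hvL) hL
    rw [← Finset.sum_filter_add_sum_filter_not Finset.univ (fun L : Submodule k W => ℓ ≤ L)
      (fun L => mymu r (finrank k ↥L))]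
    have hmaps : ∀ L ∈ Finset.univ.filter (fun L : Submodule k W => ¬ ℓ ≤ L),
        L ⊔ ℓ ∈ Finset.univ.filter (fun L : Submodule k W => ℓ ≤ L) := by
      intro L _
      simp only [Finset.mem_filter, Finset.mem_univ, true_and]
      exact le_sup_right
    rw [← Finset.sum_fiberwise_of_maps_to hmaps (fun L => mymu r (finrank k ↥L)),
      ← Finset.sum_add_distrib]
    apply Finset.sum_eq_zero
    intro M hM
    have hℓM : ℓ ≤ M := by
      simpa only [Finset.mem_filter, Finset.mem_univ, true_and] using hM
    have hMr : 1 ≤ finrank k ↥M := hℓ1 ▸ Submodule.finrank_mono hℓM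
    set m := finrank k ↥M - 1 with hmdef
    have hMm : finrank k ↥M = m + 1 := by omega
    have hfiber : ∀ L ∈ (Finset.univ.filter (fun L : Submodule k W => ¬ ℓ ≤ L)).filter
        (fun L => L ⊔ ℓ = M), finrank k ↥L = m := by
      intro L hL
      simp only [Finset.mem_filter, Finset.mem_univ, true_and] at hL
      obtain ⟨h1, h2⟩ := hL
      have hkey := Submodule.finrank_sup_add_finrank_inf_eq ℓ L
      rw [sup_comm ℓ L, h2, hdis L h1, finrank_bot, hℓ1] at hkey
      omega
    rw [Finset.sum_congr rfl (fun L hL => by rw [hfiber L hL]), Finset.sum_const]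
    -- card of fiber
    set ℓ' : Submodule k ↥M := Submodule.comap M.subtype ℓ with hℓ'def
    have hmapℓ' : Submodule.map M.subtype ℓ' = ℓ := by
      rw [hℓ'def, Submodule.map_comap_subtype, inf_eq_right.mpr hℓM]
    have hinj : Function.Injective (Submodule.map M.subtype) :=
      Submodule.map_injective_of_injective (Submodule.injective_subtype M)
    have E : { L : Submodule k W // (¬ ℓ ≤ L) ∧ L ⊔ ℓ = M } ≃
        { q : Submodule k ↥M // IsCompl ℓ' q } :=
      { toFun := fun L => ⟨Submodule.comap M.subtype L.1, by
          obtain ⟨L, h1, h2⟩ := L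
          have hLM : L ≤ M := h2 ▸ le_sup_left
          have hmapL : Submodule.map M.subtype (Submodule.comap M.subtype L) = L := by
            rw [Submodule.map_comap_subtype, inf_eq_right.mpr hLM]
          constructor
          · rw [disjoint_iff]
            rw [hℓ'def, ← Submodule.comap_inf, hdis L h1, Submodule.comap_bot,
              Submodule.ker_subtype]
          · rw [codisjoint_iff]
            apply hinj
            rw [Submodule.map_sup, hmapℓ', hmapL, Submodule.map_subtype_top, sup_comm]
            exact h2⟩
        invFun := fun q => ⟨Submodule.map M.subtype q.1, by
          obtain ⟨q, hq⟩ := q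
          constructor
          · intro hle
            have h' : ℓ' ≤ Submodule.comap M.subtype (Submodule.map M.subtype q) :=
              Submodule.comap_mono hle
            rw [Submodule.comap_map_eq, Submodule.ker_subtype, sup_bot_eq] at h'
            have hb : ℓ' = ⊥ := le_bot_iff.mp (disjoint_iff.mp hq.disjoint ▸ le_inf le_rfl h')
            have hlb : ℓ = ⊥ := by rw [← hmapℓ', hb, Submodule.map_bot]
            have : v ∈ (⊥ : Submodule k W) := hlb ▸ hvℓ
            exact hv ((Submodule.mem_bot k).mp this)
          · rw [← hmapℓ', ← Submodule.map_sup, sup_comm, codisjoint_iff.mp hq.codisjoint,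
              Submodule.map_subtype_top]⟩
        left_inv := fun L => by
          apply Subtype.ext
          have hLM : L.1 ≤ M := le_trans le_sup_left (le_of_eq L.2.2)
          simp only
          rw [Submodule.map_comap_subtype, inf_eq_right.mpr hLM]
        right_inv := fun q => by
          apply Subtype.ext
          simp only
          rw [Submodule.comap_map_eq, Submodule.ker_subtype, sup_bot_eq] }
    have hℓ'1 : finrank k ↥ℓ' = 1 := by
      rw [LinearEquiv.finrank_eq (Submodule.comapSubtypeEquivOfLe hℓM), hℓ1]
    have hquot : finrank k (↥M ⧸ ℓ') = m := by
      have := Submodule.finrank_quotient_add_finrank ℓ'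
      rw [hℓ'1] at this
      omega
    have hcard : ((Finset.univ.filter (fun L : Submodule k W => ¬ ℓ ≤ L)).filter
        (fun L => L ⊔ ℓ = M)).card = r ^ m := by
      rw [Finset.filter_filter]
      have h1 : (Finset.univ.filter (fun L : Submodule k W => (¬ ℓ ≤ L) ∧ L ⊔ ℓ = M)).card
          = Nat.card { L : Submodule k W // (¬ ℓ ≤ L) ∧ L ⊔ ℓ = M } := by
        rw [Nat.card_eq_fintype_card, Fintype.card_subtype]
      rw [h1, Nat.card_congr E, card_isCompl, hℓ'1, hquot, mul_one]
    rw [hcard, hMm, mymu_succ, nsmul_eq_mul]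
    push_cast
    ring

private lemma sum_mu_le (k : Type*) [Field k] [Finite k] (U : Type*) [AddCommGroup U]
    [Module k U] [Finite U] (W : Submodule k U) :
    ∑ᶠ L ∈ {L : Submodule k U | L ≤ W}, mymu (Nat.card k) (finrank k ↥L)
      = if finrank k (↥W) = 0 then 1 else 0 := by
  classical
  rw [← sum_mu_eq k ↥W, ← finsum_mem_univ
    (f := fun L : Submodule k ↥W => mymu (Nat.card k) (finrank k ↥L))]
  apply finsum_mem_eq_of_bijOn (Submodule.comap W.subtype)
  · refine ⟨fun L _ => Set.mem_univ _, ?_, ?_⟩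
    · intro a ha b hb h
      have ha' : Submodule.map W.subtype (Submodule.comap W.subtype a) = a := by
        rw [Submodule.map_comap_subtype, inf_eq_right.mpr ha]
      have hb' : Submodule.map W.subtype (Submodule.comap W.subtype b) = b := by
        rw [Submodule.map_comap_subtype, inf_eq_right.mpr hb]
      rw [← ha', ← hb', h]
    · intro L' _
      refine ⟨Submodule.map W.subtype L', Submodule.map_subtype_le W L', ?_⟩
      rw [Submodule.comap_map_eq, Submodule.ker_subtype, sup_bot_eq]
  · intro L hL
    congr 1
    exact LinearEquiv.finrank_eq (Submodule.comapSubtypeEquivOfLe hL).symm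

private lemma lemB (F : Type) [Field F] [Fintype F] (K : Subfield F)
    (V : Type) [AddCommGroup V] [Module F V] [FiniteDimensional F V] :
    ∀ (n : ℕ) (W : Submodule F V), finrank F ↥W = n →
      ∑ᶠ L ∈ {L : Submodule K V | Submodule.span F (L : Set V) = W},
          mymu (Nat.card K) (finrank K ↥L)
        = mymu (Nat.card F) (finrank F ↥W) := by
  classical
  haveI : Finite V := Module.finite_of_finite F
  haveI : Module.Finite K V := Module.Finite.of_finite
  haveI : Finite (Submodule K V) := Finite.of_injective _ SetLike.coe_injective
  haveI : Finite (Submodule F V) := Finite.of_injective _ SetLike.coe_injective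
  haveI := Fintype.ofFinite (Submodule K V)
  haveI := Fintype.ofFinite (Submodule F V)
  have hconv : ∀ (W' : Submodule F V),
      (∑ᶠ L ∈ {L : Submodule K V | Submodule.span F (L : Set V) = W'},
          mymu (Nat.card K) (finrank K ↥L))
        = ∑ L ∈ Finset.univ.filter
            (fun L : Submodule K V => Submodule.span F (L : Set V) = W'),
            mymu (Nat.card K) (finrank K ↥L) := by
    intro W'
    rw [← finsum_mem_coe_finset]
    congr 1
    ext L
    simp
  intro n
  induction n using Nat.strong_induction_on with
  | _ n IH =>
    intro W hW
    rw [hconv]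
    set S : Finset (Submodule F V) := Finset.univ.filter (fun W' => W' ≤ W) with hSdef
    have hmaps : ∀ L ∈ Finset.univ.filter
        (fun L : Submodule K V => Submodule.span F (L : Set V) ≤ W),
        Submodule.span F (L : Set V) ∈ S := by
      intro L hL
      simp only [Finset.mem_filter, Finset.mem_univ, true_and] at hL
      simp only [hSdef, Finset.mem_filter, Finset.mem_univ, true_and]
      exact hL
    have hS1 := Finset.sum_fiberwise_of_maps_to hmaps
      (fun L : Submodule K V => mymu (Nat.card K) (finrank K ↥L))
    have hinner : ∀ W' ∈ S,
        (∑ L ∈ (Finset.univ.filter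
            (fun L : Submodule K V => Submodule.span F (L : Set V) ≤ W)).filter
            (fun L : Submodule K V => Submodule.span F (L : Set V) = W'),
          mymu (Nat.card K) (finrank K ↥L))
        = ∑ L ∈ Finset.univ.filter
            (fun L : Submodule K V => Submodule.span F (L : Set V) = W'),
            mymu (Nat.card K) (finrank K ↥L) := by
      intro W' hW'
      simp only [hSdef, Finset.mem_filter, Finset.mem_univ, true_and] at hW'
      apply Finset.sum_congr ?_ (fun _ _ => rfl)
      rw [Finset.filter_filter]
      ext L
      simp only [Finset.mem_filter, Finset.mem_univ, true_and]
      constructor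
      · rintro ⟨-, h⟩; exact h
      · intro h; exact ⟨le_of_eq_of_le h hW', h⟩
    rw [Finset.sum_congr rfl hinner] at hS1
    -- hS2
    have hcond : ∀ L : Submodule K V,
        (Submodule.span F (L : Set V) ≤ W) ↔ L ≤ Submodule.restrictScalars K W := by
      intro L
      rw [Submodule.span_le]
      exact Iff.rfl
    have hS2 : ∑ L ∈ Finset.univ.filter
        (fun L : Submodule K V => Submodule.span F (L : Set V) ≤ W),
        mymu (Nat.card K) (finrank K ↥L) = if finrank F ↥W = 0 then 1 else 0 := by
      have h := sum_mu_le K V (Submodule.restrictScalars K W)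
      rw [show {L : Submodule K V | L ≤ Submodule.restrictScalars K W}
          = ↑(Finset.univ.filter
              (fun L : Submodule K V => L ≤ Submodule.restrictScalars K W)) by
            ext L; simp, finsum_mem_coe_finset] at h
      rw [show (Finset.univ.filter
          (fun L : Submodule K V => Submodule.span F (L : Set V) ≤ W))
          = Finset.univ.filter
              (fun L : Submodule K V => L ≤ Submodule.restrictScalars K W) by
            ext L; simp [hcond]]
      rw [h]
      have hiff : (finrank K ↥(Submodule.restrictScalars K W) = 0) ↔ (finrank F ↥W = 0) := by
        haveI : Module.Finite K ↥(Submodule.restrictScalars K W) := Module.Finite.of_finite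
        exact (Submodule.finrank_eq_zero (R := K) (S := Submodule.restrictScalars K W)).trans
          ((Submodule.restrictScalars_eq_bot_iff K F V).trans (Submodule.finrank_eq_zero (R := F)).symm)
      exact if_congr hiff rfl rfl
    have hS3 : ∑ W' ∈ S, mymu (Nat.card F) (finrank F ↥W')
        = if finrank F ↥W = 0 then 1 else 0 := by
      have h := sum_mu_le F V W
      rw [show {W' : Submodule F V | W' ≤ W} = ↑S by ext W'; simp [hSdef],
        finsum_mem_coe_finset] at h
      rw [h]
    have hWS : W ∈ S := by simp [hSdef]
    have split1 := Finset.add_sum_erase S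
      (fun W' => ∑ L ∈ Finset.univ.filter
          (fun L : Submodule K V => Submodule.span F (L : Set V) = W'),
          mymu (Nat.card K) (finrank K ↥L)) hWS
    have split2 := Finset.add_sum_erase S
      (fun W' => mymu (Nat.card F) (finrank F ↥W')) hWS
    have herase : ∀ W' ∈ S.erase W,
        (∑ L ∈ Finset.univ.filter
            (fun L : Submodule K V => Submodule.span F (L : Set V) = W'),
            mymu (Nat.card K) (finrank K ↥L)) = mymu (Nat.card F) (finrank F ↥W') := by
      intro W' hW'
      obtain ⟨hne, hmem⟩ := Finset.mem_erase.mp hW'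
      simp only [hSdef, Finset.mem_filter, Finset.mem_univ, true_and] at hmem
      have h1 : W' < W := lt_of_le_of_ne hmem hne
      have h2 : finrank F ↥W' < n := hW ▸ Submodule.finrank_lt_finrank_of_lt h1
      have h3 := IH (finrank F ↥W') h2 W' rfl
      rw [hconv] at h3
      exact h3
    rw [Finset.sum_congr rfl herase] at split1
    rw [hS1, hS2] at split1
    rw [hS3] at split2
    linarith [split1, split2]


/-- Rota-type lemma: for finite fields `F_r ⊆ F_q` and a finite-dimensional
`F_q`-vector space `V`, the sum of `μ_r(L) = (-1)^(dim_r L) r^(binom(dim_r L, 2))`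
over all `F_r`-subspaces `L` of `V` whose `F_q`-span is `V` equals
`μ_q(V) = (-1)^(dim_q V) q^(binom(dim_q V, 2))`. -/
theorem stmt3 (F : Type) [Field F] [Fintype F] (K : Subfield F)
    (V : Type) [AddCommGroup V] [Module F V] [FiniteDimensional F V] :
    (∑ᶠ L ∈ {L : Submodule K V | Submodule.span F (L : Set V) = ⊤},
        (-1 : ℤ) ^ (Module.finrank K L)
          * (Nat.card K : ℤ) ^ (Module.finrank K L * (Module.finrank K L - 1) / 2))
      = (-1) ^ (Module.finrank F V)
          * (Fintype.card F : ℤ) ^ (Module.finrank F V * (Module.finrank F V - 1) / 2) := by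
  have h := lemB F K V (finrank F (⊤ : Submodule F V)) ⊤ rfl
  rw [finrank_top] at h
  simp only [mymu] at h
  rw [Nat.card_eq_fintype_card (α := F)] at h
  exact h
end

section
/- Let L be a finite lattice with minimum element 0̂ and maximum element 1̂, and let μ denote the Möbius function of L. If A ⊆ L \ {0̂} is a lower crosscut of L (i.e., for every y ∈ L not in A ∪ {0̂} there exists x ∈ A with x < y), then μ(0̂, 1̂) equals the sum of (-1)^|E| over all subsets E of A whose join (supremum) equals 1̂. -/
/-
Put `F(y) = ∑ (-1)^|E|` over the subsets `E ⊆ A` with `sup E = y`. Grouping the subsets of `A`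
by their join, `∑_{z ≤ y} F(z)` is the alternating sum over all subsets of `{x ∈ A | x ≤ y}`,
which is `1` if that set is empty and `0` otherwise. Because `A` is a lower crosscut, the set is
empty exactly when `y = ⊥`. So `F` and `μ(⊥, ·)` satisfy the same recursion, and Möbius
inversion identifies both with the Möbius function `mu ℤ ⊥` of Mathlib's incidence algebra.
-/

open Finset IncidenceAlgebra

section MoebiusBot

variable {α : Type*} [PartialOrder α] [OrderBot α] [LocallyFiniteOrder α] [DecidableEq α]

theorem eq_mu_bot_of_sum_Iic {f : α → ℤ}
    (hf : ∀ y, ∑ z ∈ Iic y, f z = if y = ⊥ then 1 else 0) (y : α) :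
    f y = mu ℤ ⊥ y := by
  rw [moebius_inversion_bot f _ (fun y => (hf y).symm) y]
  simp

end MoebiusBot

section LowerCrosscut

variable {α : Type*} [PartialOrder α] [OrderBot α]

def IsLowerCrosscut (A : Set α) : Prop :=
  ⊥ ∉ A ∧ ∀ y, y ∉ A → y ≠ ⊥ → ∃ x ∈ A, x < y

theorem IsLowerCrosscut.forall_not_le_iff {A : Set α} (hA : IsLowerCrosscut A) (y : α) :
    (∀ x ∈ A, ¬x ≤ y) ↔ y = ⊥ := by
  constructor
  · intro h
    by_contra hy
    by_cases hyA : y ∈ A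
    · exact h y hyA le_rfl
    · obtain ⟨x, hxA, hxy⟩ := hA.2 y hyA hy
      exact h x hxA hxy.le
  · rintro rfl x hxA hx
    exact hA.1 (le_bot_iff.mp hx ▸ hxA)

end LowerCrosscut

section SupSignSum

variable {α : Type*} [SemilatticeSup α] [OrderBot α] [DecidableLE α]

def supSignSum [DecidableEq α] (s : Finset α) (y : α) : ℤ :=
  ∑ E ∈ s.powerset with E.sup id = y, (-1) ^ #E

theorem powerset_filter_sup_le (s : Finset α) (y : α) :
    {E ∈ s.powerset | E.sup id ≤ y} = {x ∈ s | x ≤ y}.powerset := by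
  ext E
  simp only [mem_filter, mem_powerset, Finset.sup_le_iff, id, subset_iff]
  grind

theorem sum_Iic_supSignSum [DecidableEq α] [LocallyFiniteOrderBot α] (s : Finset α) (y : α) :
    ∑ z ∈ Iic y, supSignSum s z = if ∀ x ∈ s, ¬x ≤ y then 1 else 0 := by
  simp only [supSignSum, sum_fiberwise_eq_sum_filter, mem_Iic]
  rw [powerset_filter_sup_le, sum_powerset_neg_one_pow_card]
  exact if_congr filter_eq_empty_iff rfl rfl

end SupSignSum

open scoped Classical

/-- Rota's crosscut theorem, lower-crosscut form: if `A` is a lower crosscut of a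
finite lattice `L`, then `μ(⊥,⊤) = ∑ (-1)^|E|` over subsets `E ⊆ A` with join `⊤`. -/
theorem stmt4 (L : Type) [Lattice L] [BoundedOrder L] [Fintype L]
    (μ : L → L → ℤ)
    (hμ : ∀ x y : L, x ≤ y →
      (∑ᶠ z ∈ {z : L | x ≤ z ∧ z ≤ y}, μ x z) = if x = y then 1 else 0)
    (A : Set L) (hA : ⊥ ∉ A)
    (hcross : ∀ y : L, y ∉ A → y ≠ ⊥ → ∃ x ∈ A, x < y) :
    μ ⊥ ⊤ = ∑ᶠ E ∈ {E : Finset L | ↑E ⊆ A ∧ E.sup id = ⊤}, (-1 : ℤ) ^ E.card := by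
  let : LocallyFiniteOrder L := Fintype.toLocallyFiniteOrder
  have hcut : IsLowerCrosscut A := ⟨hA, hcross⟩
  have hμ_bot : ∀ y, ∑ z ∈ Iic y, μ ⊥ z = if y = ⊥ then 1 else 0 := fun y => by
    have hIic : {z : L | ⊥ ≤ z ∧ z ≤ y} = ↑(Iic y) := by ext; simp
    rw [← finsum_mem_coe_finset, ← hIic, hμ ⊥ y bot_le]
    exact if_congr eq_comm rfl rfl
  have hF_bot : ∀ y, ∑ z ∈ Iic y, supSignSum A.toFinset z = if y = ⊥ then 1 else 0 := fun y => by
    simpa [hcut.forall_not_le_iff] using sum_Iic_supSignSum A.toFinset y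
  have hsets : {E : Finset L | ↑E ⊆ A ∧ E.sup id = ⊤}
      = ↑{E ∈ A.toFinset.powerset | E.sup id = ⊤} := by
    ext E
    simp
  rw [hsets, finsum_mem_coe_finset, eq_mu_bot_of_sum_Iic hμ_bot,
    ← eq_mu_bot_of_sum_Iic hF_bot, supSignSum]
end

section
/- Let L be a finite lattice with minimum element 0̂ and maximum element 1̂, and let μ denote the Möbius function of L. If B ⊆ L \ {1̂} is an upper crosscut of L (i.e., for every y ∈ L not in B ∪ {1̂} there exists x ∈ B with x > y), then μ(0̂, 1̂) equals the sum of (-1)^|E| over all subsets E of B whose meet (infimum) equals 0̂. -/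
/-!
For `y ∈ L`, the sets `E ⊆ B` with `y ≤ ⋀ E` are the subsets of `{x ∈ B | y ≤ x}`, which by the
crosscut property is empty exactly when `y = ⊤`; hence `∑_{E ⊆ B, y ≤ ⋀ E} (-1)^|E| = δ(y, ⊤)`.
Substituting this into `μ(⊥, ⊤) = ∑_y μ(⊥, y) δ(y, ⊤)`, exchanging the two sums and using
`∑_{y ≤ ⋀ E} μ(⊥, y) = δ(⋀ E, ⊥)` gives the formula.
-/

open Finset

namespace Finset

variable {α : Type*} [SemilatticeInf α] [OrderTop α]

theorem powerset_filter_le_inf (s : Finset α) (y : α) [DecidablePred (y ≤ ·)] :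
    {E ∈ s.powerset | y ≤ E.inf id} = {x ∈ s | y ≤ x}.powerset := by
  ext E
  simp only [mem_filter, mem_powerset, Finset.le_inf_iff, id, subset_iff]
  exact ⟨fun ⟨hs, hy⟩ x hx => ⟨hs hx, hy x hx⟩,
    fun h => ⟨fun x hx => (h hx).1, fun x hx => (h hx).2⟩⟩

theorem sum_powerset_filter_le_inf_neg_one_pow_card [DecidableEq α] (s : Finset α) (y : α)
    [DecidablePred (y ≤ ·)] :
    ∑ E ∈ s.powerset with y ≤ E.inf id, (-1 : ℤ) ^ #E =
      if {x ∈ s | y ≤ x} = ∅ then 1 else 0 := by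
  rw [powerset_filter_le_inf, sum_powerset_neg_one_pow_card]

end Finset

theorem filter_le_eq_empty_iff_eq_top {α : Type*} [PartialOrder α] [OrderTop α]
    {s : Finset α} (htop : ⊤ ∉ s) (hcover : ∀ y ≠ ⊤, ∃ x ∈ s, y ≤ x) (y : α)
    [DecidablePred (y ≤ ·)] :
    {x ∈ s | y ≤ x} = ∅ ↔ y = ⊤ := by
  rw [filter_eq_empty_iff]
  constructor
  · intro h
    by_contra hy
    obtain ⟨x, hx, hyx⟩ := hcover y hy
    exact h hx hyx
  · rintro rfl x hx hle
    exact htop (top_le_iff.mp hle ▸ hx)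

theorem moebius_bot_top_eq_sum_crosscut {L : Type*} [Lattice L] [BoundedOrder L] [Fintype L]
    [DecidableEq L] [DecidableLE L] (μ : L → L → ℤ)
    (hμ : ∀ y : L, ∑ z with z ≤ y, μ ⊥ z = if y = ⊥ then 1 else 0)
    {s : Finset L} (htop : ⊤ ∉ s) (hcover : ∀ y ≠ ⊤, ∃ x ∈ s, y ≤ x) :
    μ ⊥ ⊤ = ∑ E ∈ s.powerset with E.inf id = ⊥, (-1 : ℤ) ^ #E := by
  have hδ (y : L) : ∑ E ∈ s.powerset with y ≤ E.inf id, (-1 : ℤ) ^ #E =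
      if y = ⊤ then 1 else 0 := by
    simp only [sum_powerset_filter_le_inf_neg_one_pow_card,
      filter_le_eq_empty_iff_eq_top htop hcover]
  calc μ ⊥ ⊤ = ∑ y, μ ⊥ y * if y = ⊤ then 1 else 0 := by simp
    _ = ∑ y, ∑ E ∈ s.powerset with y ≤ E.inf id, μ ⊥ y * (-1) ^ #E := by
      simp only [← hδ, mul_sum]
    _ = ∑ E ∈ s.powerset, ∑ y with y ≤ E.inf id, μ ⊥ y * (-1) ^ #E :=
      sum_comm' fun y E => by simp [and_comm]
    _ = ∑ E ∈ s.powerset, if E.inf id = ⊥ then (-1) ^ #E else 0 := by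
      simp only [← sum_mul, hμ, ite_mul, one_mul, zero_mul]
    _ = ∑ E ∈ s.powerset with E.inf id = ⊥, (-1 : ℤ) ^ #E := (sum_filter _ _).symm

open scoped Classical

/-- Rota's crosscut theorem, upper-crosscut form: if `B` is an upper crosscut of a
finite lattice `L`, then `μ(⊥,⊤) = ∑ (-1)^|E|` over subsets `E ⊆ B` with meet `⊥`. -/
theorem stmt5 (L : Type) [Lattice L] [BoundedOrder L] [Fintype L]
    (μ : L → L → ℤ)
    (hμ : ∀ x y : L, x ≤ y →
      (∑ᶠ z ∈ {z : L | x ≤ z ∧ z ≤ y}, μ x z) = if x = y then 1 else 0)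
    (B : Set L) (hB : ⊤ ∉ B)
    (hcross : ∀ y : L, y ∉ B → y ≠ ⊤ → ∃ x ∈ B, y < x) :
    μ ⊥ ⊤ = ∑ᶠ E ∈ {E : Finset L | ↑E ⊆ B ∧ E.inf id = ⊥}, (-1 : ℤ) ^ E.card := by
  have hμ_bot (y : L) : ∑ z with z ≤ y, μ ⊥ z = if y = ⊥ then 1 else 0 := by
    rw [← finsum_mem_coe_finset, if_congr eq_comm rfl rfl, ← hμ ⊥ y bot_le]
    simp
  have hcover (y : L) (hy : y ≠ ⊤) : ∃ x ∈ B.toFinset, y ≤ x := by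
    by_cases hyB : y ∈ B
    · exact ⟨y, by simpa using hyB, le_rfl⟩
    · obtain ⟨x, hx, hyx⟩ := hcross y hyB hy
      exact ⟨x, by simpa using hx, hyx.le⟩
  have hsets : {E : Finset L | ↑E ⊆ B ∧ E.inf id = ⊥} =
      ↑{E ∈ B.toFinset.powerset | E.inf id = ⊥} := by
    ext E
    simp
  rw [moebius_bot_top_eq_sum_crosscut μ hμ_bot (by simpa using hB) hcover, hsets,
    finsum_mem_coe_finset]
end

section
/- Every subgroup G of AGL(1,F_q) is of the form S(γ^((q-1)/d), b, H) for some divisor d of q-1, some b ∈ F_q, and some additive subgroup H of F_q such that the triple (γ^((q-1)/d), b, H) lies in S. -/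
open Matrix
open scoped Classical

/-! The linear parts of the elements of `G` form a subgroup of the cyclic group `Fˣ`, so they are
generated by `a = γ ^ ((q - 1) / d)` with `d` the order of that subgroup. The elements of `G` with
linear part `1` are the translations by an additive subgroup `H`; conjugating them by an element
`[[a, b], [0, 1]]` of `G` shows that `a • H ⊆ H`, hence `H` is stable under `F_p(a)`. Every element
of `G` is a translation in `H` times a power of `[[a, b], [0, 1]]`. -/

theorem Subgroup.eq_zpowers_pow_card_div {G : Type*} [CommGroup G] [Finite G] {g : G}
    (hg : ∀ x, x ∈ Subgroup.zpowers g) (K : Subgroup G) :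
    K = Subgroup.zpowers (g ^ (Nat.card G / Nat.card K)) := by
  have : IsCyclic G := ⟨⟨g, hg⟩⟩
  have horder : orderOf g = Nat.card G := orderOf_eq_card_of_forall_mem_zpowers hg
  have hdvd : Nat.card K ∣ Nat.card G := K.card_subgroup_dvd_card
  have hpos : Nat.card G / Nat.card K ≠ 0 :=
    (Nat.div_pos (Nat.le_of_dvd Nat.card_pos hdvd) Nat.card_pos).ne'
  -- Both `K` and the `zpowers` lie in the kernel of `x ↦ x ^ Nat.card K`, which in a cyclic group
  -- has exactly `Nat.card K` elements.
  set kerK := (powMonoidHom (Nat.card K) : G →* G).ker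
  have hcard_ker : Nat.card kerK = Nat.card K := by
    rw [IsCyclic.card_powMonoidHom_ker, Nat.gcd_eq_right hdvd]
  have hcard_zpowers :
      Nat.card (Subgroup.zpowers (g ^ (Nat.card G / Nat.card K))) = Nat.card K := by
    rw [Nat.card_zpowers, orderOf_pow_of_dvd hpos (horder.symm ▸ Nat.div_dvd_of_dvd hdvd), horder,
      Nat.div_div_self hdvd Nat.card_pos.ne']
  have hK : K ≤ kerK := fun x hx =>
    orderOf_dvd_iff_pow_eq_one.mp (K.orderOf_dvd_natCard hx)
  have hZ : Subgroup.zpowers (g ^ (Nat.card G / Nat.card K)) ≤ kerK := by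
    rw [Subgroup.zpowers_le]
    change (g ^ _) ^ _ = 1
    rw [← pow_mul, Nat.div_mul_cancel hdvd, pow_card_eq_one']
  exact (Subgroup.eq_of_le_of_card_ge hK hcard_ker.le).trans
    (Subgroup.eq_of_le_of_card_ge hZ (by rw [hcard_zpowers, hcard_ker])).symm

theorem Subring.inv_mem_of_fintype {K : Type*} [Field K] [Fintype K] (S : Subring K) {x : K}
    (hx : x ∈ S) : x⁻¹ ∈ S := by
  rcases eq_or_ne x 0 with rfl | hx0
  · simp
  have hcard : 2 ≤ Fintype.card K := Fintype.one_lt_card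
  have hinv : x⁻¹ = x ^ (Fintype.card K - 2) := by
    refine inv_eq_of_mul_eq_one_right ?_
    rw [← pow_succ', show Fintype.card K - 2 + 1 = Fintype.card K - 1 by omega]
    exact FiniteField.pow_card_sub_one_eq_one x hx0
  exact hinv ▸ S.pow_mem hx _

def AddSubgroup.mulStabilizer {R : Type*} [Ring R] (H : AddSubgroup R) : Subring R where
  carrier := {x | ∀ h ∈ H, x * h ∈ H}
  zero_mem' h _ := by simp
  one_mem' h hh := by simpa using hh
  add_mem' hx hy h hh := by simpa [add_mul] using H.add_mem (hx h hh) (hy h hh)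
  neg_mem' hx h hh := by simpa using H.neg_mem (hx h hh)
  mul_mem' hx hy h hh := by simpa [mul_assoc] using hx _ (hy h hh)

theorem AddSubgroup.mul_mem_of_mem_closure_singleton {K : Type*} [Field K] [Fintype K]
    {H : AddSubgroup K} {a x h : K} (ha : ∀ h ∈ H, a * h ∈ H) (hx : x ∈ Subfield.closure {a})
    (hh : h ∈ H) : x * h ∈ H := by
  let S : Subfield K := H.mulStabilizer.toSubfield fun _ => H.mulStabilizer.inv_mem_of_fintype
  exact (Subfield.closure_le (t := S)).mpr (Set.singleton_subset_iff.mpr ha) hx h hh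

namespace AGL

variable {F : Type} [Field F]

def mk (a : Fˣ) (b : F) : GL2 F where
  val := !![(a : F), b; 0, 1]
  inv := !![((a⁻¹ : Fˣ) : F), -(a⁻¹ * b : F); 0, 1]
  val_inv := by ext i j; fin_cases i <;> fin_cases j <;> simp
  inv_val := by ext i j; fin_cases i <;> fin_cases j <;> simp

@[simp]
lemma coe_mk (a : Fˣ) (b : F) : (mk a b : Matrix (Fin 2) (Fin 2) F) = !![(a : F), b; 0, 1] :=
  rfl

lemma mk_mul_mk (a a' : Fˣ) (b b' : F) : mk a b * mk a' b' = mk (a * a') (a * b' + b) := by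
  ext i j; fin_cases i <;> fin_cases j <;> simp [Matrix.mul_apply, Fin.sum_univ_two]

@[simp]
lemma mk_one_zero : mk (1 : Fˣ) (0 : F) = 1 := by
  ext i j; fin_cases i <;> fin_cases j <;> simp

lemma mk_inv (a : Fˣ) (b : F) : (mk a b)⁻¹ = mk a⁻¹ (-(a⁻¹ * b : F)) := by
  refine (eq_inv_of_mul_eq_one_left ?_).symm
  rw [mk_mul_mk, inv_mul_cancel, Units.val_inv_eq_inv_val]
  simp

lemma exists_eq_mk_of_mem {g : GL2 F} (hg : g ∈ AGL F) : ∃ a b, g = mk a b := by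
  have hdet : IsUnit (g : Matrix (Fin 2) (Fin 2) F).det := g.isUnit.map Matrix.detMonoidHom
  rw [Matrix.det_fin_two, hg.1, hg.2, mul_one, mul_zero, sub_zero] at hdet
  refine ⟨hdet.unit, (g : Matrix (Fin 2) (Fin 2) F) 0 1, Units.ext ?_⟩
  conv_lhs => rw [Matrix.eta_fin_two (g : Matrix (Fin 2) (Fin 2) F)]
  rw [coe_mk, IsUnit.unit_spec, hg.1, hg.2]

lemma mk_zpow (a : Fˣ) (b : F) (k : ℤ) : ∃ c, mk a b ^ k = mk (a ^ k) c := by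
  induction k using Int.induction_on with
  | zero => exact ⟨0, by simp⟩
  | succ k ih =>
    obtain ⟨c, hc⟩ := ih
    exact ⟨_, by rw [_root_.zpow_add_one, hc, mk_mul_mk, _root_.zpow_add_one]⟩
  | pred k ih =>
    obtain ⟨c, hc⟩ := ih
    exact ⟨_, by rw [_root_.zpow_sub_one, hc, mk_inv, mk_mul_mk, _root_.zpow_sub_one]⟩

lemma mk_mul_inv_mk (a : Fˣ) (b c : F) : mk a b * (mk a c)⁻¹ = mk 1 (b - c) := by
  rw [mk_inv, mk_mul_mk, mul_inv_cancel, mul_neg, Units.mul_inv_cancel_left, neg_add_eq_sub]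

lemma mk_mul_mk_one_mul_inv (a : Fˣ) (b h : F) : mk a b * mk 1 h * (mk a b)⁻¹ = mk 1 (a * h) := by
  rw [mk_inv, mk_mul_mk, mk_mul_mk, mul_one, mul_inv_cancel, mul_neg, Units.mul_inv_cancel_left]
  congr 1
  ring

variable (G : Subgroup (GL2 F))

def linearParts : Subgroup Fˣ where
  carrier := {a | ∃ b, mk a b ∈ G}
  one_mem' := ⟨0, by simp⟩
  mul_mem' := by
    rintro a a' ⟨b, hb⟩ ⟨b', hb'⟩
    exact ⟨_, mk_mul_mk a a' b b' ▸ G.mul_mem hb hb'⟩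
  inv_mem' := by
    rintro a ⟨b, hb⟩
    exact ⟨_, mk_inv a b ▸ G.inv_mem hb⟩

def translations : AddSubgroup F where
  carrier := {h | mk 1 h ∈ G}
  zero_mem' := by simp
  add_mem' := by
    rintro h h' hh hh'
    simpa [mk_mul_mk, add_comm] using G.mul_mem hh hh'
  neg_mem' := by
    rintro h hh
    simpa [mk_inv] using G.inv_mem hh

variable {G}

lemma mul_mem_translations {a : Fˣ} {b h : F} (hab : mk a b ∈ G) (hh : h ∈ translations G) :
    (a : F) * h ∈ translations G := by
  have := G.mul_mem (G.mul_mem hab hh) (G.inv_mem hab)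
  rwa [mk_mul_mk_one_mul_inv] at this

lemma eq_Sgrp (hG : G ≤ AGL F) {a : Fˣ} {b : F} (hab : mk a b ∈ G)
    (hT : linearParts G = Subgroup.zpowers a) : G = Sgrp (a : F) b (translations G) := by
  apply le_antisymm
  · intro g hg
    obtain ⟨x, c, rfl⟩ := exists_eq_mk_of_mem (hG hg)
    obtain ⟨k, rfl⟩ := Subgroup.mem_zpowers_iff.mp (hT ▸ ⟨c, hg⟩ : x ∈ Subgroup.zpowers a)
    obtain ⟨c', hc'⟩ := mk_zpow a b k
    have htransl : c - c' ∈ translations G := by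
      have := G.mul_mem hg (G.inv_mem (G.zpow_mem hab k))
      rwa [hc', mk_mul_inv_mk] at this
    have hgen : mk a b ∈ Sgrp (a : F) b (translations G) := Subgroup.subset_closure (Or.inl rfl)
    have htgen : mk 1 (c - c') ∈ Sgrp (a : F) b (translations G) :=
      Subgroup.subset_closure (Or.inr ⟨_, htransl, rfl⟩)
    rw [← inv_mul_cancel_right (mk (a ^ k) c) (mk a b ^ k), hc', mk_mul_inv_mk, ← hc']
    exact Subgroup.mul_mem _ htgen (Subgroup.zpow_mem _ hgen k)
  · refine (Subgroup.closure_le G).mpr ?_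
    rintro g (hg | ⟨h, hh, hg⟩)
    · rwa [show g = mk a b from Units.ext hg]
    · rwa [show g = mk 1 h from Units.ext hg]

lemma exists_mk_mem_of_mem_linearParts {a : Fˣ} (ha : a ∈ linearParts G) :
    ∃ b, mk a b ∈ G ∧ (a = 1 → b = 0) := by
  by_cases ha1 : a = 1
  · subst ha1
    exact ⟨0, by simp, fun _ => rfl⟩
  · obtain ⟨b, hb⟩ := ha
    exact ⟨b, hb, fun h => absurd h ha1⟩

end AGL

/-- Every subgroup of `AGL(1,F_q)` is of the form `S(γ^((q-1)/d), b, H)` with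
`d ∣ q-1` and `(γ^((q-1)/d), b, H) ∈ 𝒮`. -/
theorem stmt6 (F : Type) [Field F] [Fintype F] (q : ℕ) (hq : Fintype.card F = q)
    (γ : F) (hγ0 : γ ≠ 0) (hγ : ∀ x : F, x ≠ 0 → ∃ k : ℕ, x = γ ^ k)
    (G : Subgroup (GL2 F)) (hG : G ≤ AGL F) :
    ∃ (d : ℕ) (b : F) (H : AddSubgroup F), d ∣ q - 1 ∧
      memS (γ ^ ((q - 1) / d)) b H ∧ G = Sgrp (γ ^ ((q - 1) / d)) b H := by
  set γu : Fˣ := Units.mk0 γ hγ0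
  have hγu : ∀ x : Fˣ, x ∈ Subgroup.zpowers γu := fun x => by
    obtain ⟨k, hk⟩ := hγ x x.ne_zero
    exact ⟨k, Units.ext (by simp [γu, hk])⟩
  have hcard : Nat.card Fˣ = q - 1 := by rw [Nat.card_units, Nat.card_eq_fintype_card, hq]
  set d := Nat.card (AGL.linearParts G)
  set a := γu ^ ((q - 1) / d)
  have hT : AGL.linearParts G = Subgroup.zpowers a := by
    rw [Subgroup.eq_zpowers_pow_card_div hγu (AGL.linearParts G), hcard]
  obtain ⟨b, hab, hb⟩ := AGL.exists_mk_mem_of_mem_linearParts (hT ▸ Subgroup.mem_zpowers a)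
  have hγa : γ ^ ((q - 1) / d) = (a : F) := by simp [a, γu]
  refine ⟨d, b, AGL.translations G, hcard ▸ Subgroup.card_subgroup_dvd_card _, ?_, ?_⟩
    <;> rw [hγa]
  · exact ⟨a.ne_zero, fun ha => hb (Units.val_eq_one.mp ha), fun x hx h hh =>
      AddSubgroup.mul_mem_of_mem_closure_singleton (fun _ => AGL.mul_mem_translations hab) hx hh⟩
  · exact AGL.eq_Sgrp hG hab hT
end

section
/- Suppose d and d' are divisors of q-1, and (γ^((q-1)/d), b, H) and (γ^((q-1)/d'), b', H') are triples in S such that S(γ^((q-1)/d), b, H) = S(γ^((q-1)/d'), b', H') as subgroups of AGL(1,F_q). Then d = d', H = H', and b - b' ∈ H. -/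
open Matrix
open scoped Classical

/-!
Since `a = 1` forces `b = 0`, the generator `[[a,b],[0,1]]` is the affine map `x ↦ c + a (x - c)`
with centre `c = b / (1 - a)`. Hence `S(a,b,H)` consists exactly of the maps `x ↦ c + y (x - c) + h`
with `y` a power of `a` and `h ∈ H`. Reading off the translations gives `H`, reading off the linear
parts gives the cyclic group generated by `a`, hence its order `d`, and the generator of the other
group then differs from `[[a,b],[0,1]]` by a translation in `H`.
-/

section AffineMatrices

variable {F : Type} [Field F]

lemma affine_matrix_mul (x t y s : F) :
    !![x, t; 0, 1] * !![y, s; 0, 1] = !![x * y, x * s + t; 0, 1] := by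
  simp

lemma affine_matrix_inj {x t y s : F} :
    !![x, t; 0, 1] = !![y, s; 0, 1] ↔ x = y ∧ t = s := by
  simp

lemma affine_matrix_pow (x c : F) (k : ℕ) :
    !![x, c * (1 - x); 0, 1] ^ k = !![x ^ k, c * (1 - x ^ k); 0, 1] := by
  induction k with
  | zero => simp [Matrix.one_fin_two]
  | succ k ih =>
    rw [pow_succ, ih, affine_matrix_mul, affine_matrix_inj]
    constructor <;> ring

def affineGL (x t : F) (hx : x ≠ 0) : GL2 F :=
  Matrix.GeneralLinearGroup.mkOfDetNeZero !![x, t; 0, 1] (by simpa [Matrix.det_fin_two])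

@[simp] lemma affineGL_val (x t : F) (hx : x ≠ 0) :
    (affineGL x t hx : Matrix (Fin 2) (Fin 2) F) = !![x, t; 0, 1] := rfl

end AffineMatrices

section Sgrp

variable {F : Type} [Field F] {a b : F} {H : AddSubgroup F}

/-- `b / (1 - a)` is the fixed point of `x ↦ a * x + b`; for `a = 1` it is the junk value `0`,
but then `b = 0` as well. -/
lemma memS.div_one_sub_mul (hS : memS a b H) : b / (1 - a) * (1 - a) = b := by
  by_cases ha : a = 1
  · simp [ha, hS.2.1 ha]
  · exact div_mul_cancel₀ b (sub_ne_zero.2 (Ne.symm ha))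

lemma memS.mul_mem_of_mem_powers (hS : memS a b H) {x h : F}
    (hx : x ∈ Submonoid.powers a) (hh : h ∈ H) : x * h ∈ H :=
  have hle : Submonoid.powers a ≤ (Subfield.closure {a}).toSubmonoid :=
    Submonoid.powers_le.2 (Subfield.subset_closure (Set.mem_singleton a))
  hS.2.2 x (hle hx) h hh

lemma generator_mem_Sgrp (ha : a ≠ 0) : affineGL a b ha ∈ Sgrp a b H :=
  Subgroup.subset_closure (Or.inl rfl)

lemma translation_mem_Sgrp_s7 {t : F} (ht : t ∈ H) : affineGL 1 t one_ne_zero ∈ Sgrp a b H :=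
  Subgroup.subset_closure (Or.inr ⟨t, ht, rfl⟩)

/-- Conjugating by the translation by `b / (1 - a)` turns `S(a,b,H)` into `S(a,0,H)`. -/
lemma exists_eq_of_mem_Sgrp [Finite F] (hS : memS a b H) {g : GL2 F} (hg : g ∈ Sgrp a b H) :
    ∃ x ∈ Submonoid.powers a, ∃ h ∈ H,
      (g : Matrix (Fin 2) (Fin 2) F) = !![x, b / (1 - a) * (1 - x) + h; 0, 1] := by
  change g ∈ (Subgroup.closure _).toSubmonoid at hg
  rw [Subgroup.closure_toSubmonoid_of_finite] at hg
  induction hg using Submonoid.closure_induction with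
  | mem g hg =>
    rcases hg with hg | ⟨h, hh, hg⟩
    · exact ⟨a, ⟨1, pow_one a⟩, 0, H.zero_mem, by rw [hg, add_zero, hS.div_one_sub_mul]⟩
    · exact ⟨1, one_mem _, h, hh, by simp [hg]⟩
  | one => exact ⟨1, one_mem _, 0, H.zero_mem, by simp [Matrix.one_fin_two]⟩
  | mul g₁ g₂ _ _ ih₁ ih₂ =>
    obtain ⟨x, hx, h, hh, hg₁⟩ := ih₁
    obtain ⟨y, hy, h', hh', hg₂⟩ := ih₂
    refine ⟨x * y, mul_mem hx hy, x * h' + h, H.add_mem (hS.mul_mem_of_mem_powers hx hh') hh, ?_⟩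
    rw [Units.val_mul, hg₁, hg₂, affine_matrix_mul, affine_matrix_inj]
    constructor <;> ring

lemma affineGL_mem_Sgrp_iff [Finite F] (hS : memS a b H) {x t : F} (hx : x ≠ 0) :
    affineGL x t hx ∈ Sgrp a b H ↔
      x ∈ Submonoid.powers a ∧ t - b / (1 - a) * (1 - x) ∈ H := by
  constructor
  · intro hg
    obtain ⟨y, hy, h, hh, hxy⟩ := exists_eq_of_mem_Sgrp hS hg
    obtain ⟨rfl, rfl⟩ := affine_matrix_inj.1 hxy
    exact ⟨hy, by simpa using hh⟩
  · rintro ⟨⟨k, rfl⟩, hh⟩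
    have hg : affineGL (a ^ k) t hx = affineGL 1 (t - b / (1 - a) * (1 - a ^ k)) one_ne_zero
        * affineGL a b hS.1 ^ k := by
      have hA : (affineGL a b hS.1 : Matrix (Fin 2) (Fin 2) F)
          = !![a, b / (1 - a) * (1 - a); 0, 1] := by
        rw [affineGL_val, hS.div_one_sub_mul]
      ext1
      rw [Units.val_mul, Units.val_pow_eq_pow_val, hA, affine_matrix_pow, affineGL_val,
        affineGL_val, affine_matrix_mul, affine_matrix_inj]
      constructor <;> ring
    rw [hg]
    exact mul_mem (translation_mem_Sgrp_s7 hh) (pow_mem (generator_mem_Sgrp hS.1) k)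

lemma translation_mem_Sgrp_iff [Finite F] (hS : memS a b H) {t : F} :
    affineGL 1 t one_ne_zero ∈ Sgrp a b H ↔ t ∈ H := by
  simp [affineGL_mem_Sgrp_iff hS]

end Sgrp

section Uniqueness

variable {F : Type} [Field F] {a a' b b' : F} {H H' : AddSubgroup F}

lemma addSubgroup_eq_of_Sgrp_eq [Finite F] (hS : memS a b H) (hS' : memS a' b' H')
    (heq : Sgrp a b H = Sgrp a' b' H') : H = H' := by
  ext t
  rw [← translation_mem_Sgrp_iff hS, heq, translation_mem_Sgrp_iff hS']

lemma orderOf_eq_of_Sgrp_eq [Finite F] (hS : memS a b H) (hS' : memS a' b' H')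
    (heq : Sgrp a b H = Sgrp a' b' H') : orderOf a = orderOf a' := by
  have hA' : affineGL a' b' hS'.1 ∈ Sgrp a b H := heq ▸ generator_mem_Sgrp hS'.1
  have hA : affineGL a b hS.1 ∈ Sgrp a' b' H' := heq.symm ▸ generator_mem_Sgrp hS.1
  obtain ⟨k, hk⟩ := ((affineGL_mem_Sgrp_iff hS hS'.1).1 hA').1
  obtain ⟨k', hk'⟩ := ((affineGL_mem_Sgrp_iff hS' hS.1).1 hA).1
  exact Nat.dvd_antisymm (hk' ▸ orderOf_pow_dvd k') (hk ▸ orderOf_pow_dvd k)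

lemma sub_mem_of_Sgrp_eq [Finite F] (hS : memS a b H) (heq : Sgrp a b H = Sgrp a b' H') :
    b' - b ∈ H := by
  have hA' : affineGL a b' hS.1 ∈ Sgrp a b H := heq ▸ generator_mem_Sgrp hS.1
  have h := ((affineGL_mem_Sgrp_iff hS hS.1).1 hA').2
  rwa [hS.div_one_sub_mul] at h

end Uniqueness

lemma orderOf_eq_card_sub_one {F : Type} [Field F] [Fintype F] {γ : F} (hγ0 : γ ≠ 0)
    (hγ : ∀ x : F, x ≠ 0 → ∃ k : ℕ, x = γ ^ k) : orderOf γ = Fintype.card F - 1 := by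
  have hgen : ∀ u : Fˣ, u ∈ Subgroup.zpowers (Units.mk0 γ hγ0) := fun u => by
    obtain ⟨k, hk⟩ := hγ u u.ne_zero
    have hu : u = Units.mk0 γ hγ0 ^ k := Units.ext (by simp [hk])
    exact hu ▸ Subgroup.npow_mem_zpowers _ k
  rw [← Fintype.card_units, ← Nat.card_eq_fintype_card,
    ← orderOf_eq_card_of_forall_mem_zpowers hgen, ← orderOf_units, Units.val_mk0]

lemma orderOf_pow_card_sub_one_div {F : Type} [Field F] [Fintype F] {γ : F} (hγ0 : γ ≠ 0)
    (hγ : ∀ x : F, x ≠ 0 → ∃ k : ℕ, x = γ ^ k) {d : ℕ} (hd : d ∣ Fintype.card F - 1) :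
    orderOf (γ ^ ((Fintype.card F - 1) / d)) = d := by
  have hq : Fintype.card F - 1 ≠ 0 := Nat.sub_ne_zero_of_lt Fintype.one_lt_card
  rw [← orderOf_eq_card_sub_one hγ0 hγ] at hd hq ⊢
  exact orderOf_pow_orderOf_div hq hd

/-- Uniqueness: if `S(γ^((q-1)/d), b, H) = S(γ^((q-1)/d'), b', H')` for triples in `𝒮`,
then `d = d'`, `H = H'`, and `b ≡ b' (mod H)`. -/
theorem stmt7 (F : Type) [Field F] [Fintype F] (q : ℕ) (hq : Fintype.card F = q)
    (γ : F) (hγ0 : γ ≠ 0) (hγ : ∀ x : F, x ≠ 0 → ∃ k : ℕ, x = γ ^ k)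
    (d d' : ℕ) (hd : d ∣ q - 1) (hd' : d' ∣ q - 1)
    (b b' : F) (H H' : AddSubgroup F)
    (hS : memS (γ ^ ((q - 1) / d)) b H) (hS' : memS (γ ^ ((q - 1) / d')) b' H')
    (heq : Sgrp (γ ^ ((q - 1) / d)) b H = Sgrp (γ ^ ((q - 1) / d')) b' H') :
    d = d' ∧ H = H' ∧ b - b' ∈ H := by
  subst hq
  have hdd' : d = d' := calc
    d = orderOf (γ ^ ((Fintype.card F - 1) / d)) := (orderOf_pow_card_sub_one_div hγ0 hγ hd).symm
    _ = orderOf (γ ^ ((Fintype.card F - 1) / d')) := orderOf_eq_of_Sgrp_eq hS hS' heq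
    _ = d' := orderOf_pow_card_sub_one_div hγ0 hγ hd'
  subst hdd'
  exact ⟨rfl, addSubgroup_eq_of_Sgrp_eq hS hS' heq, H.sub_mem_comm_iff.1 (sub_mem_of_Sgrp_eq hS heq)⟩
end

section
/- Let (a,b,H) ∈ S, let M = [[a,b],[0,1]] ∈ AGL(1,F_q), and let H̄ = {[[1,h],[0,1]] : h ∈ H}, a subgroup of AGL(1,F_q). Then S(a,b,H) is the internal semidirect product of the cyclic subgroup ⟨M⟩ with H̄: H̄ is a normal subgroup of S(a,b,H), ⟨M⟩ ∩ H̄ is trivial, and every element of S(a,b,H) is a product of an element of ⟨M⟩ and an element of H̄; in particular |S(a,b,H)| = ord(a) · |H|, where ord(a) is the multiplicative order of a in F_q^*. -/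
open Matrix
open scoped Classical

/-! Conjugation by `M = [[a,b],[0,1]]` sends the translation `[[1,h],[0,1]]` to
`[[1,a h],[0,1]]`, so `⟨M⟩` normalizes `H̄` because `a H ⊆ H`; hence `S(a,b,H) = ⟨M⟩ H̄`.
The power `M ^ n` is `[[a ^ n, d],[0,1]]` with `(a - 1) d = (a ^ n - 1) b`, so (using `b = 0`
when `a = 1`) `M ^ n = 1` exactly when `a ^ n = 1`: `M` has the order of `a`, and a power of `M`
that is a translation is trivial. A subgroup normalizing a subgroup it meets trivially forms
with it a product of cardinality `|⟨M⟩| |H̄| = ord(a) |H|`. -/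

open GeneralLinearGroup

theorem Subgroup.card_sup_eq_mul_of_le_normalizer {G : Type*} [Group G] {K N : Subgroup G}
    (hK : K ≤ Subgroup.normalizer N) (hKN : Disjoint K N) :
    Nat.card ↥(K ⊔ N) = Nat.card K * Nat.card N := by
  rw [← Nat.card_prod]
  refine (Nat.card_eq_of_bijective (fun p : K × N => (⟨p.1 * p.2,
    mul_mem (mem_sup_left p.1.2) (mem_sup_right p.2.2)⟩ : ↥(K ⊔ N))) ⟨?_, ?_⟩).symm
  · exact fun p q hpq => mul_injective_of_disjoint hKN (congrArg Subtype.val hpq)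
  · rintro ⟨g, hg⟩
    rw [← SetLike.mem_coe, coe_mul_of_left_le_normalizer_right K N hK] at hg
    obtain ⟨k, hk, n, hn, rfl⟩ := hg
    exact ⟨(⟨k, hk⟩, ⟨n, hn⟩), rfl⟩

section
variable {F : Type} [Field F]

def translationSubgroup (H : AddSubgroup F) : Subgroup (GL2 F) :=
  H.toSubgroup.map (upperRightHom (R := F)).toMonoidHom

lemma mem_translationSubgroup {H : AddSubgroup F} {g : GL2 F} :
    g ∈ translationSubgroup H ↔ ∃ h ∈ H, upperRightHom h = g :=
  Iff.rfl

lemma card_translationSubgroup (H : AddSubgroup F) :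
    Nat.card (translationSubgroup H) = Nat.card H :=
  Subgroup.card_map_of_injective fun _ _ h =>
    Multiplicative.toAdd.injective (injective_upperRightHom h)

lemma translations_eq_image (H : AddSubgroup F) :
    {g : GL2 F | ∃ h ∈ H, (g : Matrix (Fin 2) (Fin 2) F) = !![1, h; 0, 1]} =
      upperRightHom '' (H : Set F) := by
  ext g
  simp only [Set.mem_ofPred_eq, Set.mem_image, SetLike.mem_coe, Units.ext_iff,
    upperRightHom_apply, eq_comm]

lemma closure_translations (H : AddSubgroup F) :
    Subgroup.closure {g : GL2 F | ∃ h ∈ H, (g : Matrix (Fin 2) (Fin 2) F) = !![1, h; 0, 1]} =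
      translationSubgroup H := by
  rw [translations_eq_image, translationSubgroup, ← H.toSubgroup.closure_eq,
    MonoidHom.map_closure]
  rfl

lemma Sgrp_eq_sup {a b : F} {M : GL2 F} (hM : (M : Matrix (Fin 2) (Fin 2) F) = !![a, b; 0, 1])
    (H : AddSubgroup F) : Sgrp a b H = Subgroup.zpowers M ⊔ translationSubgroup H := by
  have hgen : {g : GL2 F | (g : Matrix (Fin 2) (Fin 2) F) = !![a, b; 0, 1]} = {M} := by
    ext g
    simp [Units.ext_iff, hM]
  rw [Sgrp, Set.ofPred_or, hgen, Subgroup.closure_union, closure_translations,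
    Subgroup.zpowers_eq_closure]

variable {a b : F} {M : GL2 F}

lemma exists_coe_pow (hM : (M : Matrix (Fin 2) (Fin 2) F) = !![a, b; 0, 1]) (n : ℕ) :
    ∃ d, ((M ^ n : GL2 F) : Matrix (Fin 2) (Fin 2) F) = !![a ^ n, d; 0, 1] ∧
      (a - 1) * d = (a ^ n - 1) * b := by
  induction n with
  | zero => exact ⟨0, by simp [one_fin_two]⟩
  | succ n ih =>
    obtain ⟨d, hd, hrel⟩ := ih
    refine ⟨a ^ n * b + d, ?_, by linear_combination hrel⟩
    simp [pow_succ, hd, hM]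

lemma pow_eq_one_iff_of_coe_eq (hM : (M : Matrix (Fin 2) (Fin 2) F) = !![a, b; 0, 1])
    (hb : a = 1 → b = 0) (n : ℕ) : M ^ n = 1 ↔ a ^ n = 1 := by
  by_cases ha : a = 1
  · have hM1 : M = 1 := Units.ext (by simp [hM, ha, hb ha, one_fin_two])
    simp [hM1, ha]
  obtain ⟨d, hd, hrel⟩ := exists_coe_pow hM n
  rw [Units.ext_iff, hd, Units.val_one, one_fin_two]
  constructor
  · intro h
    simpa using congr_fun₂ h 0 0
  · intro h
    have hd0 : d = 0 := by
      simpa [h, sub_eq_zero, ha] using hrel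
    simp [h, hd0]

lemma orderOf_eq_of_coe_eq (hM : (M : Matrix (Fin 2) (Fin 2) F) = !![a, b; 0, 1])
    (hb : a = 1 → b = 0) : orderOf M = orderOf a :=
  orderOf_eq_orderOf_iff.2 (pow_eq_one_iff_of_coe_eq hM hb)

lemma mul_upperRightHom_of_coe_eq (hM : (M : Matrix (Fin 2) (Fin 2) F) = !![a, b; 0, 1])
    (h : F) : M * upperRightHom h = upperRightHom (a * h) * M := by
  ext : 1
  simp [hM, add_comm]

lemma zpowers_le_normalizer_translationSubgroup [Finite F]
    (hM : (M : Matrix (Fin 2) (Fin 2) F) = !![a, b; 0, 1]) {H : AddSubgroup F}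
    (hH : ∀ h ∈ H, a * h ∈ H) :
    Subgroup.zpowers M ≤ Subgroup.normalizer (translationSubgroup H) := by
  rw [Subgroup.zpowers_le]
  refine Subgroup.mem_normalizer_fintype fun g hg => ?_
  obtain ⟨h, hh, rfl⟩ := mem_translationSubgroup.1 hg
  exact ⟨a * h, hH h hh, by
    rw [eq_mul_inv_iff_mul_eq]; exact (mul_upperRightHom_of_coe_eq hM h).symm⟩

lemma disjoint_zpowers_translationSubgroup [Finite F]
    (hM : (M : Matrix (Fin 2) (Fin 2) F) = !![a, b; 0, 1]) (hb : a = 1 → b = 0)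
    (H : AddSubgroup F) : Disjoint (Subgroup.zpowers M) (translationSubgroup H) := by
  rw [Subgroup.disjoint_def]
  intro g hgM hgH
  obtain ⟨n, rfl⟩ := mem_powers_iff_mem_zpowers.2 hgM
  obtain ⟨h, -, hh⟩ := mem_translationSubgroup.1 hgH
  obtain ⟨d, hd, -⟩ := exists_coe_pow hM n
  refine (pow_eq_one_iff_of_coe_eq hM hb n).2 ?_
  simpa [hd] using (congrArg (fun g : GL2 F => (g : Matrix (Fin 2) (Fin 2) F) 0 0) hh).symm

end

/-- `S(a,b,H)` is the internal semidirect product `⟨M⟩ ⋉ H̄`, where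
`M = [[a,b],[0,1]]` and `H̄ = {[[1,h],[0,1]] : h ∈ H}`; in particular
`|S(a,b,H)| = ord(a)·|H|`. -/
theorem stmt11 (F : Type) [Field F] [Fintype F]
    (a b : F) (H : AddSubgroup F) (hS : memS a b H)
    (M : GL2 F) (hM : (M : Matrix (Fin 2) (Fin 2) F) = !![a, b; 0, 1])
    (Hbar : Subgroup (GL2 F))
    (hHbar : Hbar = Subgroup.closure
      {g : GL2 F | ∃ h ∈ H, (g : Matrix (Fin 2) (Fin 2) F) = !![1, h; 0, 1]}) :
    Hbar ≤ Sgrp a b H ∧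
    (Hbar.subgroupOf (Sgrp a b H)).Normal ∧
    Subgroup.zpowers M ⊓ Hbar = ⊥ ∧
    (∀ x ∈ Sgrp a b H, ∃ m ∈ Subgroup.zpowers M, ∃ k ∈ Hbar, x = m * k) ∧
    Nat.card (Sgrp a b H) = orderOf a * Nat.card H := by
  obtain ⟨-, hb, hclosed⟩ := hS
  rw [closure_translations] at hHbar
  subst hHbar
  have hnorm := zpowers_le_normalizer_translationSubgroup hM
    (hclosed a (Subfield.subset_closure rfl))
  have hdisj := disjoint_zpowers_translationSubgroup hM hb H
  rw [Sgrp_eq_sup hM]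
  refine ⟨le_sup_right, ?_, hdisj.eq_bot, fun x hx => ?_, ?_⟩
  · exact (Subgroup.normal_subgroupOf_iff_le_normalizer le_sup_right).2
      (sup_le hnorm Subgroup.le_normalizer)
  · rw [← SetLike.mem_coe, Subgroup.coe_mul_of_left_le_normalizer_right _ _ hnorm] at hx
    obtain ⟨m, hm, k, hk, rfl⟩ := hx
    exact ⟨m, hm, k, hk, rfl⟩
  · rw [Subgroup.card_sup_eq_mul_of_le_normalizer hnorm hdisj, Nat.card_zpowers,
      orderOf_eq_of_coe_eq hM hb, card_translationSubgroup]
end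

section
/- Let S1 ≤ S2 be subgroups of AGL(1,F_q). Then there exist an element g ∈ AGL(1,F_q), divisors d1 | d2 | q-1, and additive subgroups H1 ⊆ H2 of F_q with (γ^((q-1)/d1), 0, H1) ∈ S and (γ^((q-1)/d2), 0, H2) ∈ S, such that g S1 g^(-1) = S(γ^((q-1)/d1), 0, H1) and g S2 g^(-1) = S(γ^((q-1)/d2), 0, H2). -/
open Matrix
open scoped Classical

variable {F : Type} [Field F]

def mk2 (a b : F) (ha : a ≠ 0) : GL2 F where
  val := !![a, b; 0, 1]
  inv := !![a⁻¹, -(b/a); 0, 1]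
  val_inv := by ext i j; fin_cases i <;> fin_cases j <;>
    simp [Matrix.mul_apply, Fin.sum_univ_two] <;> field_simp <;> ring
  inv_val := by ext i j; fin_cases i <;> fin_cases j <;>
    simp [Matrix.mul_apply, Fin.sum_univ_two] <;> field_simp <;> ring

@[simp] lemma mk2_val (a b : F) (ha : a ≠ 0) :
    ((mk2 a b ha : GL2 F) : Matrix (Fin 2) (Fin 2) F) = !![a, b; 0, 1] := rfl

lemma mk2_congr {a b a' b' : F} (ha : a ≠ 0) (ha' : a' ≠ 0) (h1 : a = a') (h2 : b = b') :
    mk2 a b ha = mk2 a' b' ha' := by subst h1; subst h2; rfl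

lemma mk2_mul (a b c d : F) (ha : a ≠ 0) (hc : c ≠ 0) :
    mk2 a b ha * mk2 c d hc = mk2 (a*c) (a*d+b) (mul_ne_zero ha hc) := by
  apply Units.ext
  show (!![a, b; 0, 1] : Matrix (Fin 2) (Fin 2) F) * !![c, d; 0, 1] = _
  ext i j; fin_cases i <;> fin_cases j <;> simp [Matrix.mul_apply, Fin.sum_univ_two]

lemma mk2_one : mk2 (1:F) 0 one_ne_zero = 1 := by
  apply Units.ext; simp [Matrix.one_fin_two]

lemma mk2_inv (a b : F) (ha : a ≠ 0) :
    (mk2 a b ha)⁻¹ = mk2 a⁻¹ (-(b/a)) (inv_ne_zero ha) := by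
  apply Units.ext; rfl

lemma mk2_pow (a b : F) (ha : a ≠ 0) (n : ℕ) :
    (mk2 a b ha) ^ n = mk2 (a^n) (b * ∑ i ∈ Finset.range n, a^i) (pow_ne_zero n ha) := by
  induction n with
  | zero => simpa using mk2_one.symm
  | succ n ih =>
    rw [pow_succ', ih, mk2_mul]
    refine mk2_congr _ _ (pow_succ' a n).symm ?_
    rw [geom_sum_succ]; ring

lemma AGL_det_ne {g : GL2 F} (hg : g ∈ AGL F) : (g : Matrix (Fin 2) (Fin 2) F) 0 0 ≠ 0 := by
  have hu : IsUnit ((g : Matrix (Fin 2) (Fin 2) F).det) :=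
    (Matrix.isUnit_iff_isUnit_det _).1 g.isUnit
  rw [Matrix.det_fin_two, hg.1, hg.2] at hu
  simpa using hu.ne_zero

lemma AGL_eq_mk2 {g : GL2 F} (hg : g ∈ AGL F) :
    g = mk2 ((g : Matrix (Fin 2) (Fin 2) F) 0 0) ((g : Matrix (Fin 2) (Fin 2) F) 0 1)
      (AGL_det_ne hg) := by
  apply Units.ext
  ext i j; fin_cases i <;> fin_cases j <;>
    simp [hg.1, hg.2]

lemma mk2_mem_AGL (a b : F) (ha : a ≠ 0) : mk2 a b ha ∈ AGL F := by
  constructor <;> simp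

/-- set of upper-left entries of elements of S -/
def alphaSet (S : Subgroup (GL2 F)) : Set F :=
  {a | ∃ g ∈ S, (g : Matrix (Fin 2) (Fin 2) F) 0 0 = a}

lemma mk2_mem_alphaSet {S : Subgroup (GL2 F)} {a b : F} (ha : a ≠ 0)
    (h : mk2 a b ha ∈ S) : a ∈ alphaSet S := ⟨_, h, by simp⟩

lemma alphaSet.one_mem (S : Subgroup (GL2 F)) : (1:F) ∈ alphaSet S :=
  ⟨1, S.one_mem, by simp [Matrix.one_apply]⟩

lemma alphaSet.ne_zero {S : Subgroup (GL2 F)} (hS : S ≤ AGL F) {a : F}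
    (ha : a ∈ alphaSet S) : a ≠ 0 := by
  obtain ⟨g, hg, rfl⟩ := ha
  exact AGL_det_ne (hS hg)

lemma alphaSet.mul_mem {S : Subgroup (GL2 F)} (hS : S ≤ AGL F) {a b : F}
    (ha : a ∈ alphaSet S) (hb : b ∈ alphaSet S) : a * b ∈ alphaSet S := by
  obtain ⟨g, hg, rfl⟩ := ha
  obtain ⟨g', hg', rfl⟩ := hb
  refine ⟨g * g', S.mul_mem hg hg', ?_⟩
  rw [AGL_eq_mk2 (hS hg), AGL_eq_mk2 (hS hg'), mk2_mul]
  simp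

lemma alphaSet.inv_mem {S : Subgroup (GL2 F)} (hS : S ≤ AGL F) {a : F}
    (ha : a ∈ alphaSet S) : a⁻¹ ∈ alphaSet S := by
  obtain ⟨g, hg, rfl⟩ := ha
  refine ⟨g⁻¹, S.inv_mem hg, ?_⟩
  conv_lhs => rw [AGL_eq_mk2 (hS hg)]
  rw [mk2_inv]
  simp

lemma alphaSet.pow_mem {S : Subgroup (GL2 F)} (hS : S ≤ AGL F) {a : F}
    (ha : a ∈ alphaSet S) (n : ℕ) : a ^ n ∈ alphaSet S := by
  induction n with
  | zero => simpa using alphaSet.one_mem S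
  | succ n ih => rw [pow_succ]; exact alphaSet.mul_mem hS ih ha

/-- translation part of S -/
def Hsub (S : Subgroup (GL2 F)) : AddSubgroup F where
  carrier := {h | ∃ g ∈ S, (g : Matrix (Fin 2) (Fin 2) F) = !![1, h; 0, 1]}
  zero_mem' := ⟨1, S.one_mem, by simp [Matrix.one_fin_two]⟩
  add_mem' := by
    rintro x y ⟨g, hg, hgv⟩ ⟨g', hg', hgv'⟩
    have : g = mk2 1 x one_ne_zero := Units.ext (by simpa using hgv)
    have h' : g' = mk2 1 y one_ne_zero := Units.ext (by simpa using hgv')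
    refine ⟨g * g', S.mul_mem hg hg', ?_⟩
    rw [this, h', mk2_mul]
    norm_num [add_comm]
  neg_mem' := by
    rintro x ⟨g, hg, hgv⟩
    have : g = mk2 1 x one_ne_zero := Units.ext (by simpa using hgv)
    refine ⟨g⁻¹, S.inv_mem hg, ?_⟩
    rw [this, mk2_inv]
    norm_num

lemma mem_Hsub {S : Subgroup (GL2 F)} {h : F} :
    h ∈ Hsub S ↔ mk2 1 h one_ne_zero ∈ S := by
  constructor
  · rintro ⟨g, hg, hgv⟩
    have : g = mk2 1 h one_ne_zero := Units.ext (by simpa using hgv)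
    rwa [← this]
  · intro hmem
    exact ⟨_, hmem, by simp⟩

section fin
variable [Fintype F]

/-- stabilizer subfield of an additive subgroup in a finite field -/
def Ksub (H : AddSubgroup F) : Subfield F where
  carrier := {x | ∀ h ∈ H, x * h ∈ H}
  zero_mem' := by intro h hh; simpa using H.zero_mem
  one_mem' := by intro h hh; simpa using hh
  add_mem' := by
    intro x y hx hy h hh
    have := H.add_mem (hx h hh) (hy h hh)
    simpa [add_mul] using this
  neg_mem' := by
    intro x hx h hh
    have := H.neg_mem (hx h hh)
    simpa using this
  mul_mem' := by
    intro x y hx hy h hh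
    have := hx (y * h) (hy h hh)
    simpa [mul_assoc] using this
  inv_mem' := by
    intro x hx h hh
    rcases eq_or_ne x 0 with rfl | hx0
    · simpa using H.zero_mem
    · have hinj : Function.Injective (fun z : H => (⟨x * z, hx z z.2⟩ : H)) := by
        intro z w hzw
        have : x * (z:F) = x * w := by simpa using congrArg Subtype.val hzw
        exact Subtype.ext (mul_left_cancel₀ hx0 this)
      have hsurj := Finite.surjective_of_injective hinj
      obtain ⟨z, hz⟩ := hsurj ⟨h, hh⟩
      have hz' : x * (z:F) = h := congrArg Subtype.val hz
      have : x⁻¹ * h = z := by field_simp [← hz']; exact hz'.symm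
      rw [this]; exact z.2

lemma Ksub_closure {a : F} {H : AddSubgroup F} (ha : a ∈ Ksub H) :
    ∀ x ∈ Subfield.closure {a}, ∀ h ∈ H, x * h ∈ H := by
  intro x hx
  have : Subfield.closure {a} ≤ Ksub H := by
    rw [Subfield.closure_le]
    simpa using ha
  exact this hx

/-- conjugating translations by an element of S lands in H -/
lemma a_mem_Ksub {S : Subgroup (GL2 F)} {a b : F} (ha : a ≠ 0)
    (hmem : mk2 a b ha ∈ S) : a ∈ Ksub (Hsub S) := by
  intro h hh
  rw [mem_Hsub] at hh ⊢
  have h1 : mk2 a b ha * mk2 1 h one_ne_zero * (mk2 a b ha)⁻¹ ∈ S :=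
    S.mul_mem (S.mul_mem hmem hh) (S.inv_mem hmem)
  have : mk2 a b ha * mk2 1 h one_ne_zero * (mk2 a b ha)⁻¹
      = mk2 1 (a * h) one_ne_zero := by
    rw [mk2_inv, mk2_mul, mk2_mul]
    apply mk2_congr
    · field_simp
    · field_simp; ring
  rwa [this] at h1
end fin

/-- the structural lemma: a "normalized" subgroup of AGL equals `Sgrp a 0 (Hsub S)` -/
theorem structural (S : Subgroup (GL2 F)) (hS : S ≤ AGL F) (a : F) (ha : a ≠ 0)
    (hgen : ∀ x ∈ alphaSet S, ∃ j : ℕ, x = a ^ j)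
    (hmem : mk2 a 0 ha ∈ S) :
    S = Sgrp a 0 (Hsub S) := by
  apply le_antisymm
  · intro s hs
    have hsA := hS hs
    have hrep := AGL_eq_mk2 hsA
    set x := (s : Matrix (Fin 2) (Fin 2) F) 0 0 with hx
    set y := (s : Matrix (Fin 2) (Fin 2) F) 0 1 with hy
    have hxA : x ∈ alphaSet S := ⟨s, hs, rfl⟩
    obtain ⟨j, hj⟩ := hgen x hxA
    have hgen1 : mk2 a 0 ha ∈ Sgrp a 0 (Hsub S) :=
      Subgroup.subset_closure (Or.inl (by simp))
    have hu : (mk2 a 0 ha)^j ∈ Sgrp a 0 (Hsub S) := pow_mem hgen1 j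
    have huS : (mk2 a 0 ha)^j ∈ S := pow_mem hmem j
    have hupow : (mk2 a 0 ha)^j = mk2 (a^j) 0 (pow_ne_zero j ha) := by
      rw [mk2_pow]; exact mk2_congr _ _ rfl (by ring)
    have htr : ((mk2 a 0 ha)^j)⁻¹ * s ∈ S := S.mul_mem (S.inv_mem huS) hs
    have heq : ((mk2 a 0 ha)^j)⁻¹ * s = mk2 1 ((a^j)⁻¹ * y) one_ne_zero := by
      have hj' : (s : Matrix (Fin 2) (Fin 2) F) 0 0 = a ^ j := hj
      rw [hupow, mk2_inv]
      conv_lhs => rw [hrep]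
      rw [mk2_mul]
      apply mk2_congr
      · rw [hj']; field_simp
      · simp
    have hH : (a^j)⁻¹ * y ∈ Hsub S := mem_Hsub.2 (by rw [← heq]; exact htr)
    have htrmem : ((mk2 a 0 ha)^j)⁻¹ * s ∈ Sgrp a 0 (Hsub S) := by
      rw [heq]
      exact Subgroup.subset_closure (Or.inr ⟨_, hH, by simp⟩)
    have : s = (mk2 a 0 ha)^j * (((mk2 a 0 ha)^j)⁻¹ * s) := by group
    rw [this]
    exact Subgroup.mul_mem _ hu htrmem
  · rw [Sgrp, Subgroup.closure_le]
    rintro g (hg | ⟨h, hh, hg⟩)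
    · have : g = mk2 a 0 ha := Units.ext (by simpa using hg)
      rw [this]; exact hmem
    · have : g = mk2 1 h one_ne_zero := Units.ext (by simpa using hg)
      rw [this]; exact mem_Hsub.1 hh

lemma mem_map_conj {S : Subgroup (GL2 F)} {u x : GL2 F} :
    x ∈ S.map (MulAut.conj u).toMonoidHom ↔ ∃ s ∈ S, u * s * u⁻¹ = x := by
  simp [Subgroup.mem_map, MulAut.conj]

lemma map_conj_le_AGL {S : Subgroup (GL2 F)} (hS : S ≤ AGL F) {u : GL2 F}
    (hu : u ∈ AGL F) : S.map (MulAut.conj u).toMonoidHom ≤ AGL F := by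
  intro x hx
  obtain ⟨s, hs, rfl⟩ := mem_map_conj.1 hx
  exact (AGL F).mul_mem ((AGL F).mul_mem hu (hS hs)) ((AGL F).inv_mem hu)

lemma conj_trans (t x y : F) (hx : x ≠ 0) :
    mk2 1 t one_ne_zero * mk2 x y hx * (mk2 1 t one_ne_zero)⁻¹
      = mk2 x (y + t * (1 - x)) hx := by
  rw [mk2_inv, mk2_mul, mk2_mul]
  apply mk2_congr
  · ring
  · field_simp; ring

lemma alphaSet_map_trans (S : Subgroup (GL2 F)) (hS : S ≤ AGL F) (t : F) :
    alphaSet (S.map (MulAut.conj (mk2 1 t one_ne_zero)).toMonoidHom) = alphaSet S := by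
  ext a
  constructor
  · rintro ⟨g, hg, rfl⟩
    obtain ⟨s, hs, rfl⟩ := mem_map_conj.1 hg
    have := AGL_eq_mk2 (hS hs)
    refine ⟨s, hs, ?_⟩
    conv_rhs => rw [this, conj_trans]
    simp
  · rintro ⟨g, hg, rfl⟩
    have hrep := AGL_eq_mk2 (hS hg)
    refine ⟨_, mem_map_conj.2 ⟨g, hg, rfl⟩, ?_⟩
    conv_lhs => rw [hrep, conj_trans]
    simp

lemma map_conj_trans_of_trans (S : Subgroup (GL2 F)) (hS : S ≤ AGL F) (t : F)
    (hall : ∀ s ∈ S, (s : Matrix (Fin 2) (Fin 2) F) 0 0 = 1) :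
    S.map (MulAut.conj (mk2 1 t one_ne_zero)).toMonoidHom = S := by
  have key : ∀ s ∈ S, mk2 1 t one_ne_zero * s * (mk2 1 t one_ne_zero)⁻¹ = s := by
    intro s hs
    have hrep := AGL_eq_mk2 (hS hs)
    conv_lhs => rw [hrep]
    rw [conj_trans]
    conv_rhs => rw [hrep]
    exact mk2_congr _ _ rfl (by rw [hall s hs]; ring)
  ext x
  rw [mem_map_conj]
  constructor
  · rintro ⟨s, hs, rfl⟩; rwa [key s hs]
  · intro hx; exact ⟨x, hx, key x hx⟩

lemma map_conj_one (S : Subgroup (GL2 F)) :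
    S.map (MulAut.conj (1 : GL2 F)).toMonoidHom = S := by
  ext x
  rw [mem_map_conj]
  constructor
  · rintro ⟨s, hs, rfl⟩; simpa using hs
  · intro hx; exact ⟨x, hx, by simp⟩

lemma exists_gen [Fintype F] (q : ℕ) (hq : Fintype.card F = q) (γ : F) (hγ0 : γ ≠ 0)
    (hγ : ∀ x : F, x ≠ 0 → ∃ k : ℕ, x = γ ^ k)
    (S : Subgroup (GL2 F)) (hS : S ≤ AGL F) :
    ∃ n : ℕ, 0 < n ∧ n ∣ q - 1 ∧ γ ^ n ∈ alphaSet S ∧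
      (∀ k : ℕ, γ ^ k ∈ alphaSet S → n ∣ k) ∧
      (∀ x ∈ alphaSet S, ∃ j : ℕ, x = (γ ^ n) ^ j) := by
  set T : Set ℕ := {k | 0 < k ∧ γ ^ k ∈ alphaSet S} with hT
  have hq1 : q - 1 ∈ T := by
    constructor
    · have : 1 < q := hq ▸ Fintype.one_lt_card
      omega
    · have h1 : γ ^ (q - 1) = 1 := by
        rw [← hq]; exact FiniteField.pow_card_sub_one_eq_one γ hγ0
      rw [h1]; exact alphaSet.one_mem S
  set n := sInf T with hn
  obtain ⟨hnpos, hnA⟩ : n ∈ T := Nat.sInf_mem ⟨q - 1, hq1⟩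
  have hdvd : ∀ k : ℕ, γ ^ k ∈ alphaSet S → n ∣ k := by
    intro k hk
    have hne : ((γ ^ n) ^ (k / n)) ≠ 0 := pow_ne_zero _ (pow_ne_zero _ hγ0)
    have hsplit : γ ^ (k % n) = ((γ ^ n) ^ (k / n))⁻¹ * γ ^ k := by
      rw [inv_mul_eq_div, eq_div_iff hne, ← pow_mul, ← pow_add, Nat.mod_add_div]
    have hr : γ ^ (k % n) ∈ alphaSet S := by
      rw [hsplit]
      exact alphaSet.mul_mem hS
        (alphaSet.inv_mem hS (alphaSet.pow_mem hS hnA _)) hk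
    by_contra hnd
    have hmod : k % n ≠ 0 := fun h => hnd (Nat.dvd_of_mod_eq_zero h)
    have : k % n ∈ T := ⟨Nat.pos_of_ne_zero hmod, hr⟩
    have := Nat.sInf_le this
    have hlt : k % n < n := Nat.mod_lt _ hnpos
    omega
  refine ⟨n, hnpos, ?_, hnA, hdvd, ?_⟩
  · exact hdvd _ hq1.2
  · intro x hx
    obtain ⟨k, rfl⟩ := hγ x (alphaSet.ne_zero hS hx)
    obtain ⟨j, rfl⟩ := hdvd k hx
    exact ⟨j, by rw [pow_mul]⟩

lemma Hsub_mono {S S' : Subgroup (GL2 F)} (h : S ≤ S') : Hsub S ≤ Hsub S' := by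
  intro x hx
  rw [mem_Hsub] at hx ⊢
  exact h hx

lemma alphaSet_mono {S S' : Subgroup (GL2 F)} (h : S ≤ S') :
    alphaSet S ⊆ alphaSet S' := by
  rintro a ⟨g, hg, rfl⟩
  exact ⟨g, h hg, rfl⟩

lemma exists_mk2_mem {S : Subgroup (GL2 F)} (hS : S ≤ AGL F) {a : F}
    (ha : a ∈ alphaSet S) : ∃ (b : F) (h : a ≠ 0), mk2 a b h ∈ S := by
  obtain ⟨g, hg, rfl⟩ := ha
  exact ⟨_, AGL_det_ne (hS hg), by rw [← AGL_eq_mk2 (hS hg)]; exact hg⟩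

lemma assemble [Fintype F] (q : ℕ) (hq : Fintype.card F = q)
    (γ : F) (hγ0 : γ ≠ 0)
    (S1 S2 : Subgroup (GL2 F)) (h12 : S1 ≤ S2) (h2 : S2 ≤ AGL F)
    (n1 n2 : ℕ) (hn1pos : 0 < n1) (hn2pos : 0 < n2)
    (hn1dvd : n1 ∣ q - 1) (h21 : n2 ∣ n1)
    (hn1gen : ∀ x ∈ alphaSet S1, ∃ j : ℕ, x = (γ ^ n1) ^ j)
    (hn2gen : ∀ x ∈ alphaSet S2, ∃ j : ℕ, x = (γ ^ n2) ^ j)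
    (t : F)
    (hmem1 : mk2 (γ ^ n1) 0 (pow_ne_zero _ hγ0) ∈
      S1.map (MulAut.conj (mk2 1 t one_ne_zero)).toMonoidHom)
    (hmem2 : mk2 (γ ^ n2) 0 (pow_ne_zero _ hγ0) ∈
      S2.map (MulAut.conj (mk2 1 t one_ne_zero)).toMonoidHom) :
    ∃ g : GL2 F, g ∈ AGL F ∧
      ∃ (d1 d2 : ℕ) (H1 H2 : AddSubgroup F), d1 ∣ d2 ∧ d2 ∣ q - 1 ∧ H1 ≤ H2 ∧
        memS (γ ^ ((q - 1) / d1)) 0 H1 ∧ memS (γ ^ ((q - 1) / d2)) 0 H2 ∧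
        S1.map (MulAut.conj g).toMonoidHom = Sgrp (γ ^ ((q - 1) / d1)) 0 H1 ∧
        S2.map (MulAut.conj g).toMonoidHom = Sgrp (γ ^ ((q - 1) / d2)) 0 H2 := by
  have hS1 : S1 ≤ AGL F := le_trans h12 h2
  have hq1 : q - 1 ≠ 0 := by
    have : 1 < q := hq ▸ Fintype.one_lt_card
    omega
  have hn2dvd : n2 ∣ q - 1 := dvd_trans h21 hn1dvd
  have e1 : (q - 1) / ((q - 1) / n1) = n1 := Nat.div_div_self hn1dvd hq1
  have e2 : (q - 1) / ((q - 1) / n2) = n2 := Nat.div_div_self hn2dvd hq1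
  have hd12 : (q - 1) / n1 ∣ (q - 1) / n2 := by
    obtain ⟨e, he⟩ := h21
    have h1 : n1 * ((q - 1) / n1) = q - 1 := Nat.mul_div_cancel' hn1dvd
    have h2' : n2 * ((q - 1) / n2) = q - 1 := Nat.mul_div_cancel' hn2dvd
    refine ⟨e, ?_⟩
    apply Nat.eq_of_mul_eq_mul_left hn2pos
    rw [h2']
    calc q - 1 = n1 * ((q - 1) / n1) := h1.symm
    _ = n2 * ((q - 1) / n1 * e) := by rw [he]; ring
  set u : GL2 F := mk2 1 t one_ne_zero with hu
  have huAGL : u ∈ AGL F := mk2_mem_AGL _ _ _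
  set S1' := S1.map (MulAut.conj u).toMonoidHom with hS1'def
  set S2' := S2.map (MulAut.conj u).toMonoidHom with hS2'def
  have hS1'A : S1' ≤ AGL F := map_conj_le_AGL hS1 huAGL
  have hS2'A : S2' ≤ AGL F := map_conj_le_AGL h2 huAGL
  have ha1 : alphaSet S1' = alphaSet S1 := alphaSet_map_trans S1 hS1 t
  have ha2 : alphaSet S2' = alphaSet S2 := alphaSet_map_trans S2 h2 t
  refine ⟨u, huAGL, (q - 1) / n1, (q - 1) / n2, Hsub S1', Hsub S2', hd12,
    Nat.div_dvd_of_dvd hn2dvd, Hsub_mono (Subgroup.map_mono h12), ?_, ?_, ?_, ?_⟩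
  · rw [e1]
    exact ⟨pow_ne_zero _ hγ0, fun _ => rfl, Ksub_closure (a_mem_Ksub _ hmem1)⟩
  · rw [e2]
    exact ⟨pow_ne_zero _ hγ0, fun _ => rfl, Ksub_closure (a_mem_Ksub _ hmem2)⟩
  · rw [e1]
    exact structural S1' hS1'A _ (pow_ne_zero _ hγ0) (by rw [ha1]; exact hn1gen) hmem1
  · rw [e2]
    exact structural S2' hS2'A _ (pow_ne_zero _ hγ0) (by rw [ha2]; exact hn2gen) hmem2


/-- Any pair of subgroups `S₁ ≤ S₂` of `AGL(1,F_q)` can be simultaneously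
conjugated to `S(γ^((q-1)/d₁),0,H₁) ≤ S(γ^((q-1)/d₂),0,H₂)` with `d₁ ∣ d₂ ∣ q-1`
and `H₁ ⊆ H₂`. -/
theorem stmt13 (F : Type) [Field F] [Fintype F] (q : ℕ) (hq : Fintype.card F = q)
    (γ : F) (hγ0 : γ ≠ 0) (hγ : ∀ x : F, x ≠ 0 → ∃ k : ℕ, x = γ ^ k)
    (S1 S2 : Subgroup (GL2 F)) (h12 : S1 ≤ S2) (h2 : S2 ≤ AGL F) :
    ∃ g : GL2 F, g ∈ AGL F ∧
      ∃ (d1 d2 : ℕ) (H1 H2 : AddSubgroup F), d1 ∣ d2 ∧ d2 ∣ q - 1 ∧ H1 ≤ H2 ∧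
        memS (γ ^ ((q - 1) / d1)) 0 H1 ∧ memS (γ ^ ((q - 1) / d2)) 0 H2 ∧
        S1.map (MulAut.conj g).toMonoidHom = Sgrp (γ ^ ((q - 1) / d1)) 0 H1 ∧
        S2.map (MulAut.conj g).toMonoidHom = Sgrp (γ ^ ((q - 1) / d2)) 0 H2 := by
  have hS1 : S1 ≤ AGL F := le_trans h12 h2
  obtain ⟨n1, hn1pos, hn1dvd, hn1A, hn1min, hn1gen⟩ := exists_gen q hq γ hγ0 hγ S1 hS1
  obtain ⟨n2, hn2pos, hn2dvd, hn2A, hn2min, hn2gen⟩ := exists_gen q hq γ hγ0 hγ S2 h2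
  have h21 : n2 ∣ n1 := hn2min n1 (alphaSet_mono h12 hn1A)
  have hae : (γ ^ n2) ^ (n1 / n2) = γ ^ n1 := by
    rw [← pow_mul, Nat.mul_div_cancel' h21]
  have ha1ne : (γ : F) ^ n1 ≠ 0 := pow_ne_zero _ hγ0
  have ha2ne : (γ : F) ^ n2 ≠ 0 := pow_ne_zero _ hγ0
  by_cases hA1 : (γ : F) ^ n1 = 1
  · by_cases hA2 : (γ : F) ^ n2 = 1
    · -- both trivial: conjugate by identity (t = 0)
      refine assemble q hq γ hγ0 S1 S2 h12 h2 n1 n2 hn1pos hn2pos hn1dvd h21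
        hn1gen hn2gen 0 ?_ ?_
      · refine mem_map_conj.2 ⟨1, S1.one_mem, ?_⟩
        rw [mul_one, mul_inv_cancel]
        exact ((mk2_congr _ one_ne_zero hA1 rfl).trans mk2_one).symm
      · refine mem_map_conj.2 ⟨1, S2.one_mem, ?_⟩
        rw [mul_one, mul_inv_cancel]
        exact ((mk2_congr _ one_ne_zero hA2 rfl).trans mk2_one).symm
    · -- S1 trivial, S2 not
      obtain ⟨b2, hb2ne, hb2⟩ := exists_mk2_mem h2 hn2A
      have ha2m1 : (γ : F) ^ n2 - 1 ≠ 0 := sub_ne_zero.2 hA2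
      refine assemble q hq γ hγ0 S1 S2 h12 h2 n1 n2 hn1pos hn2pos hn1dvd h21
        hn1gen hn2gen (b2 / (γ ^ n2 - 1)) ?_ ?_
      · refine mem_map_conj.2 ⟨1, S1.one_mem, ?_⟩
        rw [mul_one, mul_inv_cancel]
        exact ((mk2_congr _ one_ne_zero hA1 rfl).trans mk2_one).symm
      · refine mem_map_conj.2 ⟨_, hb2, ?_⟩
        rw [conj_trans]
        apply mk2_congr _ _ rfl
        field_simp
        ring
  · -- a1 ≠ 1, hence a2 ≠ 1
    have hA2 : (γ : F) ^ n2 ≠ 1 := by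
      intro h
      apply hA1
      rw [← hae, h, one_pow]
    obtain ⟨b1, hb1ne, hb1⟩ := exists_mk2_mem hS1 hn1A
    obtain ⟨b2, hb2ne, hb2⟩ := exists_mk2_mem h2 hn2A
    have ha1m1 : (γ : F) ^ n1 - 1 ≠ 0 := sub_ne_zero.2 hA1
    have ha2m1 : (γ : F) ^ n2 - 1 ≠ 0 := sub_ne_zero.2 hA2
    set t : F := b1 / (γ ^ n1 - 1) with ht
    set u : GL2 F := mk2 1 t one_ne_zero with hu
    set S2' := S2.map (MulAut.conj u).toMonoidHom with hS2'def
    have hS2'A : S2' ≤ AGL F := map_conj_le_AGL h2 (mk2_mem_AGL _ _ _)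
    -- mk2 a1 0 ∈ S1'
    have hmem1 : mk2 (γ ^ n1) 0 ha1ne ∈ S1.map (MulAut.conj u).toMonoidHom := by
      refine mem_map_conj.2 ⟨_, hb1, ?_⟩
      rw [conj_trans]
      apply mk2_congr _ _ rfl
      rw [ht]
      field_simp
      ring
    have hmem1' : mk2 (γ ^ n1) 0 ha1ne ∈ S2' := Subgroup.map_mono h12 hmem1
    -- mk2 a2 b2' ∈ S2'
    set b2' : F := b2 + t * (1 - γ ^ n2) with hb2'
    have hmemb2' : mk2 (γ ^ n2) b2' ha2ne ∈ S2' := by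
      refine mem_map_conj.2 ⟨_, hb2, ?_⟩
      rw [conj_trans]
    -- powers
    set e : ℕ := n1 / n2 with he
    set G : F := ∑ i ∈ Finset.range e, (γ ^ n2) ^ i with hG
    have hGval : G = (γ ^ n1 - 1) / (γ ^ n2 - 1) := by
      rw [hG, geom_sum_eq hA2, hae]
    have hpowe : (mk2 (γ ^ n2) b2' ha2ne) ^ e ∈ S2' := pow_mem hmemb2' e
    have hpowe_eq : (mk2 (γ ^ n2) b2' ha2ne) ^ e
        = mk2 (γ ^ n1) (b2' * G) ha1ne := by
      rw [mk2_pow]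
      exact mk2_congr _ _ hae rfl
    have htr : (mk2 (γ ^ n1) 0 ha1ne)⁻¹ * (mk2 (γ ^ n2) b2' ha2ne) ^ e ∈ S2' :=
      S2'.mul_mem (S2'.inv_mem hmem1') hpowe
    have htr_eq : (mk2 (γ ^ n1) 0 ha1ne)⁻¹ * (mk2 (γ ^ n2) b2' ha2ne) ^ e
        = mk2 1 ((γ ^ n1)⁻¹ * (b2' * G)) one_ne_zero := by
      rw [hpowe_eq, mk2_inv, mk2_mul]
      apply mk2_congr
      · field_simp
      · field_simp
        ring
    have h0 : (γ ^ n1)⁻¹ * (b2' * G) ∈ Hsub S2' :=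
      mem_Hsub.2 (by rw [← htr_eq]; exact htr)
    have hcl := Ksub_closure (a_mem_Ksub ha2ne hmemb2')
    have ha2cl : (γ : F) ^ n2 ∈ Subfield.closure {(γ : F) ^ n2} :=
      Subfield.subset_closure rfl
    have hzcl : (γ : F) ^ n1 * (γ ^ n2 - 1) * (γ ^ n1 - 1)⁻¹
        ∈ Subfield.closure {(γ : F) ^ n2} := by
      have h1 : (γ : F) ^ n1 ∈ Subfield.closure {(γ : F) ^ n2} := by
        rw [← hae]; exact pow_mem ha2cl _
      exact mul_mem (mul_mem h1 (sub_mem ha2cl (one_mem _)))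
        (inv_mem (sub_mem h1 (one_mem _)))
    have hb2'H : b2' ∈ Hsub S2' := by
      have := hcl _ hzcl _ h0
      have heq : (γ : F) ^ n1 * (γ ^ n2 - 1) * (γ ^ n1 - 1)⁻¹
          * ((γ ^ n1)⁻¹ * (b2' * G)) = b2' := by
        rw [hGval]
        field_simp
      rwa [heq] at this
    have hnbH : -((γ ^ n2)⁻¹ * b2') ∈ Hsub S2' :=
      AddSubgroup.neg_mem _ (hcl _ (inv_mem ha2cl) _ hb2'H)
    have hmem2 : mk2 (γ ^ n2) 0 ha2ne ∈ S2' := by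
      have hmul : mk2 (γ ^ n2) b2' ha2ne * mk2 1 (-((γ ^ n2)⁻¹ * b2')) one_ne_zero
          = mk2 (γ ^ n2) 0 ha2ne := by
        rw [mk2_mul]
        apply mk2_congr
        · ring
        · field_simp
          ring
      rw [← hmul]
      exact S2'.mul_mem hmemb2' (mem_Hsub.1 hnbH)
    exact assemble q hq γ hγ0 S1 S2 h12 h2 n1 n2 hn1pos hn2pos hn1dvd h21
      hn1gen hn2gen t hmem1 hmem2
end
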